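/- arXiv:2509.17555 — 8 statements merged into one kernel-verified Lean document; each statement's English description precedes it below -/
import Mathlib

section
/- If ρ : χ(F) → χ(G) is comonotonic additive, Lipschitz continuous with respect to the supremum norm, and normalised (ρ(1)=1), then ρ is positively homogeneous: for all a ≥ 0 and all X ∈ χ(F), ρ(aX) = a·ρ(X) pointwise on Ω. -/
open MeasureTheory Set Filter Topology

def Comonotone {Ω : Type*} (X Y : Ω → ℝ) : Prop :=
  ∀ ω ω' : Ω, 0 ≤ (X ω - X ω') * (Y ω - Y ω')

def BddMeas {Ω : Type*} [MeasurableSpace Ω] (X : Ω → ℝ) : Prop :=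
  Measurable X ∧ ∃ M : ℝ, ∀ ω, |X ω| ≤ M

def IsCapacity {Ω : Type*} (c : Set Ω → ℝ) : Prop :=
  c ∅ = 0 ∧ c Set.univ = 1 ∧ ∀ A B : Set Ω, A ⊆ B → c A ≤ c B

def ContFromBelow {Ω : Type*} [MeasurableSpace Ω] (c : Set Ω → ℝ) : Prop :=
  ∀ A : ℕ → Set Ω, (∀ n, MeasurableSet (A n)) → Monotone A →
    Filter.Tendsto (fun n => c (A n)) Filter.atTop (nhds (c (⋃ n, A n)))

noncomputable def distFun {Ω : Type*} (c : Set Ω → ℝ) (X : Ω → ℝ) (x : ℝ) : ℝ :=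
  1 - c {ω | X ω > x}

noncomputable def choquet {Ω : Type*} (c : Set Ω → ℝ) (X : Ω → ℝ) : ℝ :=
  (∫ x in Set.Ioi (0:ℝ), c {ω | X ω > x}) +
    ∫ x in Set.Iio (0:ℝ), (c {ω | X ω > x} - 1)

noncomputable def rdChoquet {Ω : Type*} (φ : Ω → ℝ → ℝ) (c : Set Ω → ℝ)
    (X : Ω → ℝ) (ω : Ω) : ℝ :=
  (∫ x in Set.Ioi (0:ℝ), φ ω (c {ω' | X ω' > x})) +
    ∫ x in Set.Iio (0:ℝ), (φ ω (c {ω' | X ω' > x}) - 1)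

def IsRandDistortion {Ω : Type*} (mG : MeasurableSpace Ω) (φ : Ω → ℝ → ℝ) : Prop :=
  (∀ ω, φ ω 0 = 0) ∧ (∀ ω, φ ω 1 = 1) ∧
  (∀ ω, MonotoneOn (φ ω) (Set.Icc (0:ℝ) 1)) ∧
  (∀ ω, ∀ t ∈ Set.Icc (0:ℝ) 1, φ ω t ∈ Set.Icc (0:ℝ) 1) ∧
  (∀ t ∈ Set.Icc (0:ℝ) 1, Measurable[mG] fun ω => φ ω t)

noncomputable def rminusCore {Ω : Type*} (c : Set Ω → ℝ) (X : Ω → ℝ) (t : ℝ) : ℝ :=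
  sSup {x : ℝ | distFun c X x < t}

noncomputable def rplusCore {Ω : Type*} (c : Set Ω → ℝ) (X : Ω → ℝ) (t : ℝ) : ℝ :=
  sSup {x : ℝ | distFun c X x ≤ t}

noncomputable def rminusInf {Ω : Type*} (c : Set Ω → ℝ) (X : Ω → ℝ) (t : ℝ) : ℝ :=
  sInf {x : ℝ | t ≤ distFun c X x}

noncomputable def rminusE {Ω : Type*} (c : Set Ω → ℝ) (X : Ω → ℝ) (t : ℝ) : ℝ :=
  if t = 0 then ⨅ s : Set.Ioo (0:ℝ) 1, rplusCore c X s.1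
  else if t = 1 then ⨆ s : Set.Ioo (0:ℝ) 1, rminusCore c X s.1
  else rminusCore c X t

noncomputable def rplusE {Ω : Type*} (c : Set Ω → ℝ) (X : Ω → ℝ) (t : ℝ) : ℝ :=
  if t = 0 then ⨅ s : Set.Ioo (0:ℝ) 1, rplusCore c X s.1
  else if t = 1 then ⨆ s : Set.Ioo (0:ℝ) 1, rminusCore c X s.1
  else rplusCore c X t

def Rich {Ω : Type*} [MeasurableSpace Ω] (c : Set Ω → ℝ) : Prop :=
  ∃ Z : Ω → ℝ, Measurable Z ∧ Continuous (distFun c Z) ∧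
    Filter.Tendsto (distFun c Z) Filter.atBot (nhds 0) ∧
    Filter.Tendsto (distFun c Z) Filter.atTop (nhds 1)

lemma bddMeas_smul {Ω : Type*} [MeasurableSpace Ω] (c : ℝ) {X : Ω → ℝ} (hX : BddMeas X) :
    BddMeas (fun ω => c * X ω) := by
  obtain ⟨hm, M, hM⟩ := hX
  refine ⟨hm.const_mul c, |c| * M, fun ω => ?_⟩
  rw [abs_mul]
  exact mul_le_mul_of_nonneg_left (hM ω) (abs_nonneg c)

lemma comon_smul {Ω : Type*} {a b : ℝ} (ha : 0 ≤ a) (hb : 0 ≤ b) (X : Ω → ℝ) :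
    Comonotone (fun ω => a * X ω) (fun ω => b * X ω) := by
  intro ω ω'
  have : (a * X ω - a * X ω') * (b * X ω - b * X ω') = a * b * (X ω - X ω')^2 := by ring
  rw [this]
  positivity

theorem stmt0 {Ω : Type*} [mF : MeasurableSpace Ω] (mG : MeasurableSpace Ω) (hG : mG ≤ mF)
    (ρ : (Ω → ℝ) → (Ω → ℝ))
    (hmap : ∀ X, BddMeas X → Measurable[mG] (ρ X) ∧ ∃ M : ℝ, ∀ ω, |ρ X ω| ≤ M)
    (hcomon : ∀ X Y, BddMeas X → BddMeas Y → Comonotone X Y →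
      ∀ ω, ρ (fun ω' => X ω' + Y ω') ω = ρ X ω + ρ Y ω)
    (hlip : ∃ L : ℝ, ∀ X Y, BddMeas X → BddMeas Y →
      (⨆ ω, |ρ X ω - ρ Y ω|) ≤ L * ⨆ ω, |X ω - Y ω|)
    (hnorm : ∀ ω, ρ (fun _ => (1:ℝ)) ω = 1) :
    ∀ a : ℝ, 0 ≤ a → ∀ X, BddMeas X → ∀ ω,
      ρ (fun ω' => a * X ω') ω = a * ρ X ω := by
  obtain ⟨L, hL⟩ := hlip
  have bdd0 : BddMeas (fun _ : Ω => (0:ℝ)) := ⟨measurable_const, 0, by simp⟩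
  have hzero : ∀ ω, ρ (fun _ => (0:ℝ)) ω = 0 := by
    intro ω
    have hc := hcomon (fun _ => (0:ℝ)) (fun _ => (0:ℝ)) bdd0 bdd0
      (fun ω ω' => by simp) ω
    simp only [add_zero] at hc
    linarith
  -- natural-number homogeneity
  have hnat : ∀ (b : ℝ), 0 ≤ b → ∀ X, BddMeas X → ∀ n : ℕ, ∀ ω,
      ρ (fun ω' => (n * b) * X ω') ω = n * ρ (fun ω' => b * X ω') ω := by
    intro b hb X hX n
    induction n with
    | zero =>
      intro ω
      simp only [Nat.cast_zero, zero_mul]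
      exact hzero ω
    | succ n ih =>
      intro ω
      have heq : (fun ω' => ((n + 1 : ℕ) : ℝ) * b * X ω')
          = fun ω' => ((n : ℝ) * b) * X ω' + b * X ω' := by
        funext ω'; push_cast; ring
      have hc := hcomon (fun ω' => ((n : ℝ) * b) * X ω') (fun ω' => b * X ω')
        (bddMeas_smul _ hX) (bddMeas_smul _ hX)
        (comon_smul (by positivity) hb X) ω
      rw [heq, hc, ih ω]
      push_cast; ring
  -- rational homogeneity
  have hrat : ∀ q : ℚ, 0 ≤ q → ∀ X, BddMeas X → ∀ ω,
      ρ (fun ω' => (q : ℝ) * X ω') ω = (q : ℝ) * ρ X ω := by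
    intro q hq X hX ω
    set m : ℕ := q.num.toNat with hm
    set d : ℕ := q.den with hd
    have hd0 : (0:ℝ) < d := by positivity
    have hqval : (q : ℝ) = (m : ℝ) / d := by
      have hnum : ((m : ℕ) : ℝ) = ((q.num : ℤ) : ℝ) := by
        exact_mod_cast congrArg (fun z : ℤ => (z : ℝ))
          (Int.toNat_of_nonneg (Rat.num_nonneg.mpr hq))
      rw [Rat.cast_def, hnum, hd]
    have hinv : (0:ℝ) ≤ 1 / d := by positivity
    -- ρ ((1/d) X) = (1/d) ρ X
    have h1 := hnat (1 / d) hinv X hX d ω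
    have hdx : (fun ω' => ((d : ℝ) * (1 / d)) * X ω') = X := by
      funext ω'
      rw [mul_one_div_cancel (ne_of_gt hd0), one_mul]
    rw [hdx] at h1
    have h2 := hnat (1 / d) hinv X hX m ω
    have hqx : (fun ω' => (q : ℝ) * X ω') = fun ω' => ((m : ℝ) * (1 / d)) * X ω' := by
      funext ω'; rw [hqval]; ring_nf
    have hρd : ρ (fun ω' => (1 / d) * X ω') ω = (1 / d) * ρ X ω := by
      field_simp at h1 ⊢
      linarith
    rw [hqx, h2, hρd, hqval]
    ring
  -- extend to reals by Lipschitz continuity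
  intro a ha X hX ω
  by_cases hne : Nonempty Ω
  · obtain ⟨hXm, M, hM⟩ := hX
    have hM0 : 0 ≤ M := le_trans (abs_nonneg _) (hM (Classical.arbitrary Ω))
    obtain ⟨_, Ma, hMa⟩ := hmap (fun ω' => a * X ω') (bddMeas_smul a ⟨hXm, M, hM⟩)
    set C : ℝ := |L| * M + |ρ X ω| with hC
    have hC0 : 0 ≤ C := by positivity
    have key : ∀ ε : ℝ, 0 < ε → |ρ (fun ω' => a * X ω') ω - a * ρ X ω| ≤ 0 + ε := by
      intro ε hε
      obtain ⟨q, hq1, hq2⟩ := exists_rat_btwn (lt_add_of_pos_right a (show (0:ℝ) < ε / (C + 1) by positivity))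
      have hq0 : (0:ℚ) ≤ q := by exact_mod_cast le_of_lt (lt_of_le_of_lt ha hq1)
      have haq : |a - (q : ℝ)| ≤ ε / (C + 1) := by
        rw [abs_of_nonpos (by linarith)]
        linarith
      obtain ⟨_, Mq, hMq⟩ := hmap (fun ω' => (q:ℝ) * X ω') (bddMeas_smul _ ⟨hXm, M, hM⟩)
      -- sup bound on |aX - qX|
      have hsup2 : (⨆ ω', |a * X ω' - (q:ℝ) * X ω'|) ≤ |a - (q:ℝ)| * M := by
        apply ciSup_le
        intro ω'
        have : a * X ω' - (q:ℝ) * X ω' = (a - q) * X ω' := by ring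
        rw [this, abs_mul]
        exact mul_le_mul_of_nonneg_left (hM ω') (abs_nonneg _)
      have hbddρ : BddAbove (Set.range fun ω' => |ρ (fun ω'' => a * X ω'') ω'
          - ρ (fun ω'' => (q:ℝ) * X ω'') ω'|) := by
        refine ⟨Ma + Mq, ?_⟩
        rintro x ⟨ω', rfl⟩
        calc |ρ (fun ω'' => a * X ω'') ω' - ρ (fun ω'' => (q:ℝ) * X ω'') ω'|
            ≤ |ρ (fun ω'' => a * X ω'') ω'| + |ρ (fun ω'' => (q:ℝ) * X ω'') ω'| :=
              abs_sub _ _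
          _ ≤ Ma + Mq := add_le_add (hMa ω') (hMq ω')
      have h1 : |ρ (fun ω' => a * X ω') ω - ρ (fun ω' => (q:ℝ) * X ω') ω|
          ≤ ⨆ ω', |ρ (fun ω'' => a * X ω'') ω' - ρ (fun ω'' => (q:ℝ) * X ω'') ω'| :=
        le_ciSup hbddρ ω
      have h2 := hL (fun ω' => a * X ω') (fun ω' => (q:ℝ) * X ω')
        (bddMeas_smul a ⟨hXm, M, hM⟩) (bddMeas_smul _ ⟨hXm, M, hM⟩)
      have hbddS : BddAbove (Set.range fun ω' => |a * X ω' - (q:ℝ) * X ω'|) := by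
        refine ⟨|a - (q:ℝ)| * M, ?_⟩
        rintro x ⟨ω', rfl⟩
        dsimp only
        have : a * X ω' - (q:ℝ) * X ω' = (a - q) * X ω' := by ring
        rw [this, abs_mul]
        exact mul_le_mul_of_nonneg_left (hM ω') (abs_nonneg _)
      have hS0 : (0:ℝ) ≤ ⨆ ω', |a * X ω' - (q:ℝ) * X ω'| :=
        le_trans (abs_nonneg (a * X ω - (q:ℝ) * X ω))
          (le_ciSup hbddS ω)
      have h3 : L * (⨆ ω', |a * X ω' - (q:ℝ) * X ω'|) ≤ |L| * (|a - (q:ℝ)| * M) :=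
        le_trans (mul_le_mul_of_nonneg_right (le_abs_self L) hS0)
          (mul_le_mul_of_nonneg_left hsup2 (abs_nonneg L))
      have hstep : |ρ (fun ω' => a * X ω') ω - a * ρ X ω|
          ≤ |a - (q:ℝ)| * C := by
        have hsplit : |ρ (fun ω' => a * X ω') ω - a * ρ X ω|
            ≤ |ρ (fun ω' => a * X ω') ω - ρ (fun ω' => (q:ℝ) * X ω') ω|
              + |ρ (fun ω' => (q:ℝ) * X ω') ω - a * ρ X ω| := by
          have := abs_sub_abs_le_abs_sub (ρ (fun ω' => a * X ω') ω - a * ρ X ω) 0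
          calc |ρ (fun ω' => a * X ω') ω - a * ρ X ω|
              = |(ρ (fun ω' => a * X ω') ω - ρ (fun ω' => (q:ℝ) * X ω') ω)
                + (ρ (fun ω' => (q:ℝ) * X ω') ω - a * ρ X ω)| := by ring_nf
            _ ≤ _ := abs_add_le _ _
        have hpart2 : |ρ (fun ω' => (q:ℝ) * X ω') ω - a * ρ X ω|
            = |a - (q:ℝ)| * |ρ X ω| := by
          rw [hrat q hq0 X ⟨hXm, M, hM⟩ ω,
            show (q:ℝ) * ρ X ω - a * ρ X ω = ((q:ℝ) - a) * ρ X ω from by ring,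
            abs_mul, abs_sub_comm]
        calc |ρ (fun ω' => a * X ω') ω - a * ρ X ω|
            ≤ |ρ (fun ω' => a * X ω') ω - ρ (fun ω' => (q:ℝ) * X ω') ω|
              + |a - (q:ℝ)| * |ρ X ω| := by rw [← hpart2]; exact hsplit
          _ ≤ |L| * (|a - (q:ℝ)| * M) + |a - (q:ℝ)| * |ρ X ω| :=
              add_le_add (le_trans h1 (le_trans h2 h3)) le_rfl
          _ = |a - (q:ℝ)| * C := by rw [hC]; ring
      calc |ρ (fun ω' => a * X ω') ω - a * ρ X ω|
          ≤ |a - (q:ℝ)| * C := hstep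
        _ ≤ (ε / (C + 1)) * (C + 1) := by
            apply mul_le_mul haq (by linarith) hC0 (by positivity)
        _ = ε := by field_simp
        _ ≤ 0 + ε := by linarith
    have : |ρ (fun ω' => a * X ω') ω - a * ρ X ω| ≤ 0 :=
      le_of_forall_pos_le_add key
    have := abs_nonpos_iff.mp this
    linarith [sub_eq_zero.mp this]
  · exact absurd ⟨ω⟩ hne
end

section
/- Let c be a capacity and let Z be a measurable function whose distribution function G_Z with respect to c is continuous with lim_{x→−∞} G_Z(x) = 0 and lim_{x→+∞} G_Z(x) = 1. Set U := G_Z(Z). Then the distribution function G_U of U with respect to c satisfies G_U(x) = 0 for x < 0, G_U(x) = x for x ∈ [0,1], and G_U(x) = 1 for x > 1. -/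
open MeasureTheory Set Filter Topology

theorem stmt1 {Ω : Type*} [MeasurableSpace Ω] (c : Set Ω → ℝ) (hc : IsCapacity c)
    (Z : Ω → ℝ) (hZ : Measurable Z)
    (hcont : Continuous (distFun c Z))
    (hbot : Filter.Tendsto (distFun c Z) Filter.atBot (nhds 0))
    (htop : Filter.Tendsto (distFun c Z) Filter.atTop (nhds 1)) :
    (∀ x < (0:ℝ), distFun c (fun ω => distFun c Z (Z ω)) x = 0) ∧
    (∀ x ∈ Set.Icc (0:ℝ) 1, distFun c (fun ω => distFun c Z (Z ω)) x = x) ∧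
    (∀ x > (1:ℝ), distFun c (fun ω => distFun c Z (Z ω)) x = 1) := by
  obtain ⟨h0, h1, hmono⟩ := hc
  have hnonneg : ∀ A : Set Ω, 0 ≤ c A := fun A => h0 ▸ hmono ∅ A (empty_subset A)
  have hle1 : ∀ A : Set Ω, c A ≤ 1 := fun A => h1 ▸ hmono A univ (subset_univ A)
  set G := distFun c Z with hG
  have hGmono : Monotone G := by
    intro a b hab
    have : c {ω | Z ω > b} ≤ c {ω | Z ω > a} :=
      hmono _ _ (fun ω h => lt_of_le_of_lt hab h)
    simp only [hG, distFun]; linarith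
  have hG0 : ∀ y, 0 ≤ G y := by
    intro y; simp only [hG, distFun]; linarith [hle1 {ω | Z ω > y}]
  have hG1 : ∀ y, G y ≤ 1 := by
    intro y; simp only [hG, distFun]; linarith [hnonneg {ω | Z ω > y}]
  have hIVT : ∀ y ∈ Ioo (0:ℝ) 1, ∃ t, G t = y := by
    intro y hy
    obtain ⟨a, ha⟩ := (hbot.eventually (gt_mem_nhds hy.1)).exists
    obtain ⟨b, hb⟩ := (htop.eventually (lt_mem_nhds hy.2)).exists
    obtain ⟨t, ht⟩ := intermediate_value_univ a b hcont ⟨le_of_lt ha, le_of_lt hb⟩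
    exact ⟨t, ht⟩
  refine ⟨?_, ?_, ?_⟩
  · intro x hx
    have hset : {ω | G (Z ω) > x} = univ := by
      ext ω; simp only [mem_setOf_eq, mem_univ, iff_true]
      exact lt_of_lt_of_le hx (hG0 _)
    simp only [distFun, hset, h1]; ring
  · intro x hx
    have key : c {ω | G (Z ω) > x} = 1 - x := by
      apply le_antisymm
      · rcases eq_or_lt_of_le hx.1 with h | h
        · calc c {ω | G (Z ω) > x} ≤ 1 := hle1 _
            _ = 1 - x := by rw [← h]; ring
        · refine le_of_forall_pos_le_add (fun ε hε => ?_)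
          set δ := min ε x with hδ
          have hδpos : 0 < δ := lt_min hε h
          have hδx : δ ≤ x := min_le_right _ _
          obtain ⟨t, ht⟩ := hIVT (x - δ/2) ⟨by linarith, by linarith [hx.2]⟩
          have hsub : {ω | G (Z ω) > x} ⊆ {ω | Z ω > t} := by
            intro ω hω
            by_contra hc'
            simp only [mem_setOf_eq, not_lt] at hc'
            have := hGmono hc'
            rw [ht] at this
            exact absurd (lt_of_lt_of_le hω this) (by linarith)
          have := hmono _ _ hsub
          have h2 : c {ω | Z ω > t} = 1 - (x - δ/2) := by
            have : G t = 1 - c {ω | Z ω > t} := rfl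
            rw [ht] at this; linarith
          have hδε : δ ≤ ε := min_le_left _ _
          linarith
      · rcases eq_or_lt_of_le hx.2 with h | h
        · calc (1:ℝ) - x = 0 := by rw [h]; ring
            _ ≤ c {ω | G (Z ω) > x} := hnonneg _
        · refine le_of_forall_pos_le_add (fun ε hε => ?_)
          set δ := min ε (1 - x) with hδ
          have hδpos : 0 < δ := lt_min hε (by linarith)
          have hδx : δ ≤ 1 - x := min_le_right _ _
          obtain ⟨t, ht⟩ := hIVT (x + δ/2) ⟨by linarith [hx.1], by linarith⟩
          have hsub : {ω | Z ω > t} ⊆ {ω | G (Z ω) > x} := by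
            intro ω hω
            have := hGmono (le_of_lt hω)
            rw [ht] at this
            exact lt_of_lt_of_le (by linarith) this
          have := hmono _ _ hsub
          have h2 : c {ω | Z ω > t} = 1 - (x + δ/2) := by
            have : G t = 1 - c {ω | Z ω > t} := rfl
            rw [ht] at this; linarith
          have hδε : δ ≤ ε := min_le_left _ _
          linarith
    simp only [distFun, key]; ring
  · intro x hx
    have hset : {ω | G (Z ω) > x} = ∅ := by
      ext ω; simp only [mem_setOf_eq, mem_empty_iff_false, iff_false, not_lt]
      exact le_trans (hG1 _) (le_of_lt hx)
    simp only [distFun, hset, h0]; ring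
end

section
/- Let c be a capacity and X, Y bounded measurable functions. If X ⪯_{st,c} Y (i.e. E_c(u(X)) ≤ E_c(u(Y)) for all non-decreasing deterministic functions u : ℝ → ℝ, where E_c denotes the Choquet integral), then: (i) G_X(x) ≥ G_Y(x) for all x ∈ ℝ; (ii) r⁺_X(t) ≤ r⁺_Y(t) for all t ∈ [0,1]; (iii) r⁻_X(t) ≤ r⁻_Y(t) for all t ∈ [0,1]. -/
open MeasureTheory Set Filter Topology

lemma choquet_ind {Ω : Type*} [MeasurableSpace Ω] (c : Set Ω → ℝ) (hc : IsCapacity c)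
    (Z : Ω → ℝ) (x : ℝ) :
    choquet c (fun ω => if x < Z ω then (1:ℝ) else 0) = c {ω | Z ω > x} := by
  obtain ⟨h0, h1, _⟩ := hc
  unfold choquet
  have h2 : ∀ t ∈ Set.Iio (0:ℝ),
      (fun t => c {ω | (if x < Z ω then (1:ℝ) else 0) > t} - 1) t = (fun _ => (0:ℝ)) t := by
    intro t ht
    have huniv : {ω | (if x < Z ω then (1:ℝ) else 0) > t} = Set.univ := by
      ext ω
      simp only [Set.mem_setOf_eq, Set.mem_univ, iff_true, gt_iff_lt]
      have h : (0:ℝ) ≤ if x < Z ω then (1:ℝ) else 0 := by split <;> norm_num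
      have : t < 0 := ht
      linarith
    simp only [huniv, h1]
    ring
  have key : Set.EqOn (fun t => c {ω | (if x < Z ω then (1:ℝ) else 0) > t})
      ((Set.Ioo (0:ℝ) 1).indicator fun _ => c {ω | Z ω > x}) (Set.Ioi 0) := by
    intro t ht
    have ht0 : (0:ℝ) < t := ht
    simp only [Set.indicator]
    by_cases h : t < 1
    · rw [if_pos ⟨ht0, h⟩]
      congr 1
      ext ω
      simp only [Set.mem_setOf_eq, gt_iff_lt]
      constructor
      · intro hgt
        by_contra hx
        rw [if_neg hx] at hgt
        linarith
      · intro hx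
        rw [if_pos hx]
        linarith
    · rw [if_neg (by simp only [Set.mem_Ioo, not_and]; intro _; linarith)]
      have hemp : {ω | (if x < Z ω then (1:ℝ) else 0) > t} = ∅ := by
        ext ω
        simp only [Set.mem_setOf_eq, Set.mem_empty_iff_false, iff_false, gt_iff_lt, not_lt]
        have hle : (if x < Z ω then (1:ℝ) else 0) ≤ 1 := by split <;> norm_num
        linarith
      rw [hemp, h0]
  rw [MeasureTheory.setIntegral_congr_fun measurableSet_Iio h2,
      MeasureTheory.setIntegral_congr_fun measurableSet_Ioi key,
      MeasureTheory.setIntegral_indicator measurableSet_Ioo]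
  have hint : Set.Ioi (0:ℝ) ∩ Set.Ioo 0 1 = Set.Ioo 0 1 := by
    apply Set.inter_eq_self_of_subset_right
    exact fun y hy => hy.1
  rw [hint]
  simp [Real.volume_Ioo]

theorem stmt2 {Ω : Type*} [MeasurableSpace Ω] (c : Set Ω → ℝ) (hc : IsCapacity c)
    (X Y : Ω → ℝ) (hX : BddMeas X) (hY : BddMeas Y)
    (hdom : ∀ u : ℝ → ℝ, Monotone u →
      choquet c (fun ω => u (X ω)) ≤ choquet c (fun ω => u (Y ω))) :
    (∀ x : ℝ, distFun c Y x ≤ distFun c X x) ∧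
    (∀ t ∈ Set.Icc (0:ℝ) 1, rplusE c X t ≤ rplusE c Y t) ∧
    (∀ t ∈ Set.Icc (0:ℝ) 1, rminusE c X t ≤ rminusE c Y t) := by
  classical
  haveI : Nonempty ↥(Set.Ioo (0:ℝ) 1) := ⟨⟨1/2, by norm_num, by norm_num⟩⟩
  obtain ⟨hXm, MX, hMX⟩ := hX
  obtain ⟨hYm, MY, hMY⟩ := hY
  obtain ⟨h0, h1, hmono⟩ := hc
  -- part (i)
  have hG : ∀ x : ℝ, distFun c Y x ≤ distFun c X x := by
    intro x
    have hu : Monotone (fun y : ℝ => if x < y then (1:ℝ) else 0) := by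
      intro a b hab
      dsimp only
      by_cases h : x < a
      · rw [if_pos h, if_pos (lt_of_lt_of_le h hab)]
      · rw [if_neg h]
        split <;> norm_num
    have := hdom (fun y => if x < y then (1:ℝ) else 0) hu
    rw [choquet_ind c ⟨h0, h1, hmono⟩ X x, choquet_ind c ⟨h0, h1, hmono⟩ Y x] at this
    unfold distFun
    linarith
  -- high / low values of distFun
  have high : ∀ (Z : Ω → ℝ) (M : ℝ), (∀ ω, |Z ω| ≤ M) → ∀ x, M ≤ x → distFun c Z x = 1 := by
    intro Z M hM x hx
    have : {ω | Z ω > x} = ∅ := by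
      ext ω
      simp only [Set.mem_setOf_eq, Set.mem_empty_iff_false, iff_false, gt_iff_lt, not_lt]
      have := (abs_le.mp (hM ω)).2
      linarith
    unfold distFun
    rw [this, h0]
    ring
  have low : ∀ (Z : Ω → ℝ) (M : ℝ), (∀ ω, |Z ω| ≤ M) → ∀ x, x < -M → distFun c Z x = 0 := by
    intro Z M hM x hx
    have : {ω | Z ω > x} = Set.univ := by
      ext ω
      simp only [Set.mem_setOf_eq, Set.mem_univ, iff_true, gt_iff_lt]
      have := (abs_le.mp (hM ω)).1
      linarith
    unfold distFun
    rw [this, h1]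
    ring
  -- bounds on the quantile sets
  have ub : ∀ (Z : Ω → ℝ) (M : ℝ), (∀ ω, |Z ω| ≤ M) → ∀ t, t < 1 →
      ∀ x : ℝ, distFun c Z x ≤ t → x ≤ M := by
    intro Z M hM t ht x hx
    by_contra h
    push_neg at h
    have := high Z M hM x h.le
    simp only [Set.mem_setOf_eq, this] at hx
    linarith
  have mem_lt : ∀ (Z : Ω → ℝ) (M : ℝ), (∀ ω, |Z ω| ≤ M) → ∀ t, 0 < t →
      distFun c Z (-M - 1) < t := by
    intro Z M hM t ht
    rw [low Z M hM _ (by linarith)]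
    exact ht
  -- core quantile monotonicity
  have hplus : ∀ t ∈ Set.Ioo (0:ℝ) 1, rplusCore c X t ≤ rplusCore c Y t := by
    intro t ht
    apply csSup_le_csSup
    · exact ⟨MY, fun x hx => ub Y MY hMY t ht.2 x hx⟩
    · exact ⟨-MX - 1, Set.mem_setOf_eq ▸ le_of_lt (mem_lt X MX hMX t ht.1)⟩
    · intro x hx
      exact le_trans (hG x) hx
  have hminus : ∀ t ∈ Set.Ioo (0:ℝ) 1, rminusCore c X t ≤ rminusCore c Y t := by
    intro t ht
    apply csSup_le_csSup
    · exact ⟨MY, fun x hx => ub Y MY hMY t ht.2 x (le_of_lt hx)⟩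
    · exact ⟨-MX - 1, Set.mem_setOf_eq ▸ mem_lt X MX hMX t ht.1⟩
    · intro x hx
      exact lt_of_le_of_lt (hG x) hx
  -- endpoint bounds
  have hplusX_bdd : BddBelow (Set.range fun s : ↥(Set.Ioo (0:ℝ) 1) => rplusCore c X s.1) := by
    refine ⟨-MX - 1, ?_⟩
    rintro _ ⟨s, rfl⟩
    apply le_csSup ⟨MX, fun x hx => ub X MX hMX s.1 s.2.2 x hx⟩
    exact Set.mem_setOf_eq ▸ le_of_lt (mem_lt X MX hMX s.1 s.2.1)
  have hminusY_bdd : BddAbove (Set.range fun s : ↥(Set.Ioo (0:ℝ) 1) => rminusCore c Y s.1) := by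
    refine ⟨MY, ?_⟩
    rintro _ ⟨s, rfl⟩
    apply csSup_le ⟨-MY - 1, Set.mem_setOf_eq ▸ mem_lt Y MY hMY s.1 s.2.1⟩
    intro x hx
    exact ub Y MY hMY s.1 s.2.2 x (le_of_lt hx)
  have hend : (⨅ s : ↥(Set.Ioo (0:ℝ) 1), rplusCore c X s.1) ≤
      ⨅ s : ↥(Set.Ioo (0:ℝ) 1), rplusCore c Y s.1 :=
    ciInf_mono hplusX_bdd fun s => hplus s.1 s.2
  have hend1 : (⨆ s : ↥(Set.Ioo (0:ℝ) 1), rminusCore c X s.1) ≤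
      ⨆ s : ↥(Set.Ioo (0:ℝ) 1), rminusCore c Y s.1 :=
    ciSup_mono hminusY_bdd fun s => hminus s.1 s.2
  refine ⟨hG, ?_, ?_⟩
  · intro t ht
    unfold rplusE
    by_cases h0t : t = 0
    · simp only [h0t, if_pos rfl]
      exact hend
    · by_cases h1t : t = 1
      · simp only [h1t, if_neg (by norm_num : (1:ℝ) ≠ 0), if_pos rfl]
        exact hend1
      · simp only [if_neg h0t, if_neg h1t]
        exact hplus t ⟨lt_of_le_of_ne ht.1 (Ne.symm h0t), lt_of_le_of_ne ht.2 h1t⟩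
  · intro t ht
    unfold rminusE
    by_cases h0t : t = 0
    · simp only [h0t, if_pos rfl]
      exact hend
    · by_cases h1t : t = 1
      · simp only [h1t, if_neg (by norm_num : (1:ℝ) ≠ 0), if_pos rfl]
        exact hend1
      · simp only [if_neg h0t, if_neg h1t]
        exact hminus t ⟨lt_of_le_of_ne ht.1 (Ne.symm h0t), lt_of_le_of_ne ht.2 h1t⟩
end

section
/- Two non-negative step functions X, Y on Ω are comonotonic if and only if there exist n ∈ ℕ, a measurable partition (A_i)_{i=1}^n of Ω into pairwise disjoint sets, and real numbers x_1 ≥ x_2 ≥ ⋯ ≥ x_n ≥ 0 and y_1 ≥ y_2 ≥ ⋯ ≥ y_n ≥ 0 such that X = Σ_{i=1}^n x_i·1_{A_i} and Y = Σ_{i=1}^n y_i·1_{A_i}. -/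
open MeasureTheory Set Filter Topology

lemma sum_ind_eq {Ω : Type*} (n : ℕ) (A : ℕ → Set Ω) (c : ℕ → ℝ)
    (hdis : ∀ i < n, ∀ j < n, i ≠ j → Disjoint (A i) (A j))
    {i : ℕ} (hi : i < n) {ω : Ω} (hω : ω ∈ A i) :
    ∑ k ∈ Finset.range n, Set.indicator (A k) (fun _ => c k) ω = c i := by
  rw [Finset.sum_eq_single_of_mem i (Finset.mem_range.mpr hi)]
  · exact Set.indicator_of_mem hω _
  · intro k hk hki
    have hnot : ω ∉ A k := fun h =>
      (Set.disjoint_left.mp (hdis k (Finset.mem_range.mp hk) i hi hki)) h hω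
    exact Set.indicator_of_notMem hnot _

theorem stmt9 {Ω : Type*} [MeasurableSpace Ω] (X Y : Ω → ℝ)
    (hX : Measurable X) (hY : Measurable Y)
    (hXpos : ∀ ω, 0 ≤ X ω) (hYpos : ∀ ω, 0 ≤ Y ω)
    (hXfin : (Set.range X).Finite) (hYfin : (Set.range Y).Finite) :
    Comonotone X Y ↔
      ∃ (n : ℕ) (A : ℕ → Set Ω) (x y : ℕ → ℝ),
        0 < n ∧ (∀ i < n, MeasurableSet (A i)) ∧
        (∀ i < n, ∀ j < n, i ≠ j → Disjoint (A i) (A j)) ∧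
        (⋃ i ∈ Finset.range n, A i) = Set.univ ∧
        (∀ i j, i ≤ j → j < n → x j ≤ x i) ∧ (∀ i < n, 0 ≤ x i) ∧
        (∀ i j, i ≤ j → j < n → y j ≤ y i) ∧ (∀ i < n, 0 ≤ y i) ∧
        (∀ ω, X ω = ∑ i ∈ Finset.range n, Set.indicator (A i) (fun _ => x i) ω) ∧
        (∀ ω, Y ω = ∑ i ∈ Finset.range n, Set.indicator (A i) (fun _ => y i) ω) := by
  constructor
  · intro hcom
    by_cases hne : Nonempty Ω
    swap
    · -- empty case
      refine ⟨1, fun _ => Set.univ, fun _ => 0, fun _ => 0, one_pos,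
        fun _ _ => MeasurableSet.univ, ?_, by simp, ?_, fun _ _ => le_refl 0, ?_,
        fun _ _ => le_refl 0, ?_, ?_⟩
      · intro i hi j hj hij; interval_cases i <;> interval_cases j <;> simp at hij
      · intro i j hij hj; exact le_refl 0
      · intro i j hij hj; exact le_refl 0
      · exact fun ω => absurd ⟨ω⟩ hne
      · exact fun ω => absurd ⟨ω⟩ hne
    -- nonempty case
    have hfin : (Set.range (fun ω => (X ω, Y ω))).Finite :=
      (hXfin.prod hYfin).subset (by rintro _ ⟨ω, rfl⟩; exact ⟨⟨ω, rfl⟩, ⟨ω, rfl⟩⟩)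
    set s : Finset (ℝ ×ₗ ℝ) := hfin.toFinset.image toLex with hs
    set L : List (ℝ ×ₗ ℝ) := s.sort (· ≥ ·) with hL
    set n := L.length with hn
    set p : ℕ → ℝ × ℝ := fun i => ofLex (L.getD i (toLex (0, 0))) with hp
    -- membership facts
    have hmemL : ∀ ω : Ω, toLex (X ω, Y ω) ∈ L := by
      intro ω
      rw [hL, Finset.mem_sort]
      exact Finset.mem_image_of_mem _ (hfin.mem_toFinset.mpr ⟨ω, rfl⟩)
    have hLmem : ∀ a ∈ L, ∃ ω : Ω, (X ω, Y ω) = ofLex a := by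
      intro a ha
      rw [hL, Finset.mem_sort, hs, Finset.mem_image] at ha
      obtain ⟨b, hb, rfl⟩ := ha
      obtain ⟨ω, rfl⟩ := hfin.mem_toFinset.mp hb
      exact ⟨ω, rfl⟩
    have hpget : ∀ i (hi : i < n), toLex (p i) = L[i]'(by simpa [hn] using hi) :=
      fun i hi => List.getD_eq_getElem L _ (by simpa [hn] using hi)
    have hprange : ∀ i < n, ∃ ω : Ω, (X ω, Y ω) = p i := by
      intro i hi
      obtain ⟨ω, hω⟩ := hLmem (L[i]'(by simpa [hn] using hi)) (List.getElem_mem _)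
      exact ⟨ω, by rw [hω, ← hpget i hi]; rfl⟩
    have hsorted : List.Pairwise (· ≥ ·) L := Finset.pairwise_sort _ _
    have hnodup : L.Nodup := Finset.sort_nodup _ _
    have hle : ∀ i j, i ≤ j → j < n → toLex (p j) ≤ toLex (p i) := by
      intro i j hij hj
      rcases eq_or_lt_of_le hij with rfl | hlt
      · exact le_refl _
      · rw [hpget i (lt_trans hlt hj), hpget j hj]
        exact List.pairwise_iff_get.mp hsorted ⟨i, by simpa [hn] using lt_trans hlt hj⟩
          ⟨j, by simpa [hn] using hj⟩ hlt
    refine ⟨n, fun i => {ω | X ω = (p i).1 ∧ Y ω = (p i).2},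
      fun i => (p i).1, fun i => (p i).2, ?_, ?_, ?_, ?_, ?_, ?_, ?_, ?_, ?_, ?_⟩
    · -- n > 0
      obtain ⟨ω⟩ := hne
      exact List.length_pos_iff.mpr (List.ne_nil_of_mem (hmemL ω))
    · intro i hi
      exact (hX (measurableSet_singleton _)).inter (hY (measurableSet_singleton _))
    · -- disjoint
      intro i hi j hj hij
      rw [Set.disjoint_left]
      rintro ω ⟨hx1, hy1⟩ ⟨hx2, hy2⟩
      have : toLex (p i) = toLex (p j) := by
        have : p i = p j := Prod.ext (hx1 ▸ hx2) (hy1 ▸ hy2)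
        rw [this]
      rw [hpget i hi, hpget j hj] at this
      exact hij (hnodup.getElem_inj_iff.mp this)
    · -- union
      ext ω
      simp only [Set.mem_iUnion, Finset.mem_range, Set.mem_univ, iff_true]
      obtain ⟨i, hi, hieq⟩ := List.getElem_of_mem (hmemL ω)
      refine ⟨i, by simpa [hn] using hi, ?_, ?_⟩
      · have : toLex (p i) = toLex (X ω, Y ω) := by rw [hpget i (by simpa [hn] using hi), hieq]
        have := congrArg (fun z => (ofLex z).1) this
        simpa using this.symm
      · have : toLex (p i) = toLex (X ω, Y ω) := by rw [hpget i (by simpa [hn] using hi), hieq]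
        have := congrArg (fun z => (ofLex z).2) this
        simpa using this.symm
    · -- x monotone
      intro i j hij hj
      have := hle i j hij hj
      rcases Prod.Lex.toLex_le_toLex.mp this with h | h
      · exact le_of_lt h
      · exact le_of_eq h.1
    · -- x nonneg
      intro i hi
      obtain ⟨ω, hω⟩ := hprange i hi
      show 0 ≤ (p i).1
      rw [← hω]; exact hXpos ω
    · -- y monotone
      intro i j hij hj
      have hlex := hle i j hij hj
      rcases Prod.Lex.toLex_le_toLex.mp hlex with h | h
      · obtain ⟨ω1, hω1⟩ := hprange i (lt_of_le_of_lt hij hj)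
        obtain ⟨ω2, hω2⟩ := hprange j hj
        have hc := hcom ω1 ω2
        have h1 : X ω1 = (p i).1 := by rw [← hω1]
        have h2 : X ω2 = (p j).1 := by rw [← hω2]
        have h3 : Y ω1 = (p i).2 := by rw [← hω1]
        have h4 : Y ω2 = (p j).2 := by rw [← hω2]
        rw [h1, h2, h3, h4] at hc
        nlinarith
      · exact h.2
    · -- y nonneg
      intro i hi
      obtain ⟨ω, hω⟩ := hprange i hi
      show 0 ≤ (p i).2
      rw [← hω]; exact hYpos ω
    · -- X sum
      intro ω
      obtain ⟨i, hi', hieq⟩ := List.getElem_of_mem (hmemL ω)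
      have hi : i < n := by simpa [hn] using hi'
      have hpi : toLex (p i) = toLex (X ω, Y ω) := by rw [hpget i hi, hieq]
      have hpi' : p i = (X ω, Y ω) := by
        have := congrArg ofLex hpi; simpa using this
      have hmem : ω ∈ {ω' | X ω' = (p i).1 ∧ Y ω' = (p i).2} := by
        rw [hpi']; exact ⟨rfl, rfl⟩
      rw [sum_ind_eq n _ _ ?_ hi hmem]
      · rw [hpi']
      · intro a ha b hb hab
        rw [Set.disjoint_left]
        rintro ω' ⟨hx1, hy1⟩ ⟨hx2, hy2⟩
        have : toLex (p a) = toLex (p b) := by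
          have : p a = p b := Prod.ext (hx1 ▸ hx2) (hy1 ▸ hy2)
          rw [this]
        rw [hpget a ha, hpget b hb] at this
        exact hab (hnodup.getElem_inj_iff.mp this)
    · -- Y sum
      intro ω
      obtain ⟨i, hi', hieq⟩ := List.getElem_of_mem (hmemL ω)
      have hi : i < n := by simpa [hn] using hi'
      have hpi : toLex (p i) = toLex (X ω, Y ω) := by rw [hpget i hi, hieq]
      have hpi' : p i = (X ω, Y ω) := by
        have := congrArg ofLex hpi; simpa using this
      have hmem : ω ∈ {ω' | X ω' = (p i).1 ∧ Y ω' = (p i).2} := by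
        rw [hpi']; exact ⟨rfl, rfl⟩
      rw [sum_ind_eq n _ _ ?_ hi hmem]
      · rw [hpi']
      · intro a ha b hb hab
        rw [Set.disjoint_left]
        rintro ω' ⟨hx1, hy1⟩ ⟨hx2, hy2⟩
        have : toLex (p a) = toLex (p b) := by
          have : p a = p b := Prod.ext (hx1 ▸ hx2) (hy1 ▸ hy2)
          rw [this]
        rw [hpget a ha, hpget b hb] at this
        exact hab (hnodup.getElem_inj_iff.mp this)
  · rintro ⟨n, A, x, y, hn, hmeas, hdis, huniv, hxmono, hxpos, hymono, hypos, hXeq, hYeq⟩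
    intro ω ω'
    have hω : ∃ i < n, ω ∈ A i := by
      have : ω ∈ ⋃ i ∈ Finset.range n, A i := huniv ▸ Set.mem_univ ω
      simpa [Finset.mem_range] using this
    have hω' : ∃ j < n, ω' ∈ A j := by
      have : ω' ∈ ⋃ i ∈ Finset.range n, A i := huniv ▸ Set.mem_univ ω'
      simpa [Finset.mem_range] using this
    obtain ⟨i, hi, hωi⟩ := hω
    obtain ⟨j, hj, hωj⟩ := hω'
    have hXω : X ω = x i := by rw [hXeq ω, sum_ind_eq n A x hdis hi hωi]
    have hXω' : X ω' = x j := by rw [hXeq ω', sum_ind_eq n A x hdis hj hωj]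
    have hYω : Y ω = y i := by rw [hYeq ω, sum_ind_eq n A y hdis hi hωi]
    have hYω' : Y ω' = y j := by rw [hYeq ω', sum_ind_eq n A y hdis hj hωj]
    rw [hXω, hXω', hYω, hYω']
    rcases le_total i j with h | h
    · have h1 := hxmono i j h hj
      have h2 := hymono i j h hj
      nlinarith
    · have h1 := hxmono j i h hi
      have h2 := hymono j i h hi
      nlinarith
end

section
/- If the capacity c is continuous from below, then for every bounded measurable X the distribution function G_X is right-continuous and the lower quantile function r⁻_X is left-continuous on (0,1). -/
open MeasureTheory Set Filter Topology

theorem stmt10 {Ω : Type*} [MeasurableSpace Ω] (c : Set Ω → ℝ) (hc : IsCapacity c)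
    (hcb : ContFromBelow c) (X : Ω → ℝ) (hX : BddMeas X) :
    (∀ x : ℝ, ContinuousWithinAt (distFun c X) (Set.Ici x) x) ∧
    (∀ t ∈ Set.Ioo (0:ℝ) 1, ContinuousWithinAt (rminusInf c X) (Set.Ioo 0 t) t) := by
  obtain ⟨hXm, M, hM⟩ := hX
  obtain ⟨hc0, hc1, hcmono⟩ := hc
  have hGmono : Monotone (distFun c X) := by
    intro a b hab
    have hsub : {ω | X ω > b} ⊆ {ω | X ω > a} := fun ω h => lt_of_le_of_lt hab h
    have := hcmono _ _ hsub
    simp only [distFun]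
    linarith
  constructor
  · intro x
    rw [ContinuousWithinAt]
    apply tendsto_order.2
    constructor
    · intro b hb
      filter_upwards [self_mem_nhdsWithin] with y hy
      exact lt_of_lt_of_le hb (hGmono hy)
    · intro b hb
      set A : ℕ → Set Ω := fun n => {ω | X ω > x + 1/(n+1)} with hA
      have hAmeas : ∀ n, MeasurableSet (A n) := fun n =>
        measurableSet_lt measurable_const hXm
      have hAmono : Monotone A := by
        intro n m hnm ω hω
        have h1 : (1:ℝ)/(m+1) ≤ 1/(n+1) := by
          apply one_div_le_one_div_of_le
          · positivity
          · exact_mod_cast by exact_mod_cast Nat.succ_le_succ hnm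
        simp only [hA, mem_setOf_eq] at hω ⊢
        linarith
      have hAunion : (⋃ n, A n) = {ω | X ω > x} := by
        ext ω
        simp only [mem_iUnion, hA, mem_setOf_eq]
        constructor
        · rintro ⟨n, hn⟩
          have h0 : (0:ℝ) < 1/(n+1) := by positivity
          linarith
        · intro h
          obtain ⟨n, hn⟩ := exists_nat_one_div_lt (sub_pos.2 h)
          refine ⟨n, ?_⟩
          push_cast at hn ⊢
          linarith
      have htend := hcb A hAmeas hAmono
      rw [hAunion] at htend
      have htend2 : Tendsto (fun n : ℕ => distFun c X (x + 1/(n+1))) atTop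
          (𝓝 (distFun c X x)) := by
        simp only [distFun]
        exact tendsto_const_nhds.sub htend
      obtain ⟨n, hn⟩ := (htend2.eventually (gt_mem_nhds hb)).exists
      have hxlt : x < x + 1/(n+1) := by
        have h0 : (0:ℝ) < 1/((n:ℝ)+1) := by positivity
        linarith
      filter_upwards [inter_mem_nhdsWithin (Ici x) (Iio_mem_nhds hxlt)] with y hy
      exact lt_of_le_of_lt (hGmono (le_of_lt hy.2)) hn
  · intro t ht
    obtain ⟨ht0, ht1⟩ := ht
    have hGM : distFun c X M = 1 := by
      have hemp : {ω | X ω > M} = (∅ : Set Ω) := by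
        ext ω
        simp only [mem_setOf_eq, mem_empty_iff_false, iff_false, not_lt]
        exact (abs_le.1 (hM ω)).2
      simp [distFun, hemp, hc0]
    have hne : ∀ s : ℝ, s ≤ 1 → ({x | s ≤ distFun c X x}).Nonempty :=
      fun s hs => ⟨M, by rw [mem_setOf_eq, hGM]; exact hs⟩
    have hbdd : ∀ s : ℝ, 0 < s → BddBelow {x | s ≤ distFun c X x} := by
      intro s hs
      refine ⟨-(M+1), fun x hx => ?_⟩
      by_contra h
      push_neg at h
      have huniv : {ω | X ω > x} = (univ : Set Ω) := by
        ext ω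
        simp only [mem_setOf_eq, mem_univ, iff_true]
        have := (abs_le.1 (hM ω)).1
        linarith
      have hGx : distFun c X x = 0 := by simp [distFun, huniv, hc1]
      rw [mem_setOf_eq, hGx] at hx
      linarith
    have hrmono : ∀ s s' : ℝ, 0 < s → s ≤ s' → s' ≤ 1 →
        rminusInf c X s ≤ rminusInf c X s' := by
      intro s s' hs hss hs1
      exact csInf_le_csInf (hbdd s hs) (hne s' hs1) (fun x hx => le_trans hss hx)
    have key : ∀ ε : ℝ, 0 < ε → ∃ s0 ∈ Ioo (0:ℝ) t,
        rminusInf c X t - ε < rminusInf c X s0 := by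
      intro ε hε
      by_contra h
      push_neg at h
      set x := rminusInf c X t - ε/2 with hxdef
      have hx : t ≤ distFun c X x := by
        by_contra hgx
        push_neg at hgx
        obtain ⟨s, hs1, hs2⟩ := exists_between (max_lt hgx ht0)
        have hs0 : 0 < s := lt_of_le_of_lt (le_max_right _ _) hs1
        have hsIoo : s ∈ Ioo (0:ℝ) t := ⟨hs0, hs2⟩
        have hle := h s hsIoo
        have hlt : rminusInf c X s < x := by
          rw [hxdef]; linarith
        rw [rminusInf] at hlt
        obtain ⟨y, hy, hyx⟩ := (csInf_lt_iff (hbdd s hs0) (hne s (le_of_lt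
          (lt_trans hs2 ht1)))).1 hlt
        have : s ≤ distFun c X x := le_trans hy (hGmono (le_of_lt hyx))
        have : distFun c X x < distFun c X x :=
          lt_of_lt_of_le (lt_of_le_of_lt (le_max_left _ 0) hs1) this
        exact lt_irrefl _ this
      have : rminusInf c X t ≤ x := csInf_le (hbdd t ht0) hx
      rw [hxdef] at this
      linarith
    rw [ContinuousWithinAt]
    apply tendsto_order.2
    constructor
    · intro b hb
      obtain ⟨s0, hs0, hs0lt⟩ := key (rminusInf c X t - b) (by linarith)
      filter_upwards [inter_mem_nhdsWithin (Ioo 0 t) (Ioi_mem_nhds hs0.2)] with s hs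
      have h1 : rminusInf c X s0 ≤ rminusInf c X s :=
        hrmono s0 s hs0.1 (le_of_lt hs.2) (le_of_lt (lt_trans hs.1.2 ht1))
      linarith
    · intro b hb
      filter_upwards [self_mem_nhdsWithin] with s hs
      exact lt_of_le_of_lt (hrmono s t hs.1 (le_of_lt hs.2) (le_of_lt ht1)) hb
end

section
/- Let c be a continuous-from-below capacity admitting a measurable Z with continuous distribution function G_Z tending to 0 at −∞ and 1 at +∞, and set U := G_Z(Z). Then for every non-negative bounded measurable X, the functions X and r⁻_X(U) have the same distribution function with respect to c: G_X(x) = G_{r⁻_X(U)}(x) for all x ∈ ℝ. -/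
open MeasureTheory Set Filter Topology

lemma cap_nonneg {Ω : Type*} {c : Set Ω → ℝ} (hc : IsCapacity c) (A : Set Ω) :
    0 ≤ c A := by
  have := hc.2.2 ∅ A (empty_subset A); rw [hc.1] at this; exact this

lemma cap_le_one {Ω : Type*} {c : Set Ω → ℝ} (hc : IsCapacity c) (A : Set Ω) :
    c A ≤ 1 := by
  have := hc.2.2 A univ (subset_univ A); rw [hc.2.1] at this; exact this

lemma distFun_mono {Ω : Type*} {c : Set Ω → ℝ} (hc : IsCapacity c) (X : Ω → ℝ) :
    Monotone (distFun c X) := by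
  intro a b hab
  have : {ω | X ω > b} ⊆ {ω | X ω > a} := fun ω hω => lt_of_le_of_lt hab hω
  have := hc.2.2 _ _ this
  simp only [distFun]; linarith

lemma distFun_nonneg {Ω : Type*} {c : Set Ω → ℝ} (hc : IsCapacity c) (X : Ω → ℝ) (x : ℝ) :
    0 ≤ distFun c X x := by
  have := cap_le_one hc {ω | X ω > x}; simp only [distFun]; linarith

lemma distFun_le_one {Ω : Type*} {c : Set Ω → ℝ} (hc : IsCapacity c) (X : Ω → ℝ) (x : ℝ) :
    distFun c X x ≤ 1 := by
  have := cap_nonneg hc {ω | X ω > x}; simp only [distFun]; linarith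

lemma distFun_rightTendsto {Ω : Type*} [MeasurableSpace Ω] {c : Set Ω → ℝ}
    (hcb : ContFromBelow c) {X : Ω → ℝ} (hX : Measurable X) (x : ℝ) :
    Tendsto (fun n : ℕ => distFun c X (x + 1 / (n + 1))) atTop
      (nhds (distFun c X x)) := by
  set A : ℕ → Set Ω := fun n => {ω | X ω > x + 1 / (n + 1)} with hA
  have hmeas : ∀ n, MeasurableSet (A n) := fun n => hX measurableSet_Ioi
  have hmono : Monotone A := by
    intro m n hmn ω hω
    have h1 : (1 : ℝ) / (n + 1) ≤ 1 / (m + 1) := by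
      apply one_div_le_one_div_of_le (by positivity)
      exact_mod_cast add_le_add_left (Nat.cast_le.mpr hmn) 1
    have hω' : X ω > x + 1 / (m + 1) := hω
    show X ω > x + 1 / (n + 1)
    linarith
  have hunion : (⋃ n, A n) = {ω | X ω > x} := by
    ext ω
    simp only [mem_iUnion, hA, mem_setOf_eq]
    constructor
    · rintro ⟨n, hn⟩
      have : (0:ℝ) < 1 / (n + 1) := by positivity
      linarith
    · intro h
      obtain ⟨n, hn⟩ := exists_nat_one_div_lt (sub_pos.mpr h)
      exact ⟨n, by linarith⟩
  have := hcb A hmeas hmono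
  rw [hunion] at this
  simpa only [distFun] using (tendsto_const_nhds.sub this)

lemma le_distFun_of_gt {Ω : Type*} [MeasurableSpace Ω] {c : Set Ω → ℝ}
    (hcb : ContFromBelow c) {X : Ω → ℝ} (hX : Measurable X) {x t : ℝ}
    (h : ∀ y, x < y → t ≤ distFun c X y) : t ≤ distFun c X x := by
  refine ge_of_tendsto' (distFun_rightTendsto hcb hX x) fun n => ?_
  refine h _ ?_
  have : (0:ℝ) < 1 / (n + 1) := by positivity
  linarith

lemma exists_distFun_eq {Ω : Type*} {c : Set Ω → ℝ} (hc : IsCapacity c)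
    {Z : Ω → ℝ} (hcont : Continuous (distFun c Z))
    (hbot : Tendsto (distFun c Z) atBot (nhds 0))
    (htop : Tendsto (distFun c Z) atTop (nhds 1))
    {s : ℝ} (hs : s ∈ Ioo (0:ℝ) 1) : ∃ z, distFun c Z z = s := by
  obtain ⟨a, ha⟩ := (hbot.eventually_lt_const hs.1).exists
  obtain ⟨b, hb⟩ := (htop.eventually_const_lt hs.2).exists
  have hab : a ≤ b := by
    by_contra hba
    push_neg at hba
    have := distFun_mono hc Z hba.le
    linarith
  have := intermediate_value_Icc hab hcont.continuousOn
    (mem_Icc.mpr ⟨ha.le, hb.le⟩)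
  obtain ⟨z, _, hz⟩ := this
  exact ⟨z, hz⟩

lemma tail_mid {Ω : Type*} [MeasurableSpace Ω] {c : Set Ω → ℝ} (hc : IsCapacity c)
    {Z : Ω → ℝ} (hcont : Continuous (distFun c Z))
    (hbot : Tendsto (distFun c Z) atBot (nhds 0))
    (htop : Tendsto (distFun c Z) atTop (nhds 1))
    {s : ℝ} (hs : s ∈ Ioo (0:ℝ) 1) :
    c {ω | distFun c Z (Z ω) > s} = 1 - s := by
  apply le_antisymm
  · obtain ⟨z, hz⟩ := exists_distFun_eq hc hcont hbot htop hs
    have hsub : {ω | distFun c Z (Z ω) > s} ⊆ {ω | Z ω > z} := by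
      intro ω hω
      by_contra hle
      simp only [mem_setOf_eq, not_lt] at hle
      have := distFun_mono hc Z hle
      rw [hz] at this
      exact absurd hω (not_lt.mpr this)
    calc c {ω | distFun c Z (Z ω) > s} ≤ c {ω | Z ω > z} := hc.2.2 _ _ hsub
      _ = 1 - s := by
        have : distFun c Z z = 1 - c {ω | Z ω > z} := rfl
        rw [this] at hz; linarith
  · apply le_of_forall_pos_le_add
    intro ε hε
    by_cases hcase : s + ε < 1
    · obtain ⟨z, hz⟩ := exists_distFun_eq hc hcont hbot htop
        (⟨by linarith [hs.1], hcase⟩ : s + ε ∈ Ioo (0:ℝ) 1)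
      have hsub : {ω | Z ω > z} ⊆ {ω | distFun c Z (Z ω) > s} := by
        intro ω hω
        have := distFun_mono hc Z hω.le
        rw [hz] at this
        exact lt_of_lt_of_le (by linarith) this
      have h1 := hc.2.2 _ _ hsub
      have h2 : c {ω | Z ω > z} = 1 - (s + ε) := by
        have : distFun c Z z = 1 - c {ω | Z ω > z} := rfl
        rw [this] at hz; linarith
      linarith
    · have := cap_nonneg hc {ω | distFun c Z (Z ω) > s}
      push_neg at hcase
      linarith

lemma tail_zero {Ω : Type*} [MeasurableSpace Ω] {c : Set Ω → ℝ} (hc : IsCapacity c)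
    (hcb : ContFromBelow c) {Z : Ω → ℝ} (hZ : Measurable Z)
    (hcont : Continuous (distFun c Z))
    (hbot : Tendsto (distFun c Z) atBot (nhds 0))
    (htop : Tendsto (distFun c Z) atTop (nhds 1)) :
    c {ω | distFun c Z (Z ω) > 0} = 1 := by
  set U : Ω → ℝ := fun ω => distFun c Z (Z ω) with hU
  have hUmeas : Measurable U := (hcont.measurable).comp hZ
  set A : ℕ → Set Ω := fun n => {ω | U ω > 1 / (n + 2)} with hA
  have hmeas : ∀ n, MeasurableSet (A n) := fun n => hUmeas measurableSet_Ioi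
  have hmono : Monotone A := by
    intro m n hmn ω hω
    have h1 : (1 : ℝ) / (n + 2) ≤ 1 / (m + 2) := by
      apply one_div_le_one_div_of_le (by positivity)
      exact_mod_cast add_le_add_left (Nat.cast_le.mpr hmn) 2
    exact lt_of_le_of_lt h1 hω
  have hunion : (⋃ n, A n) = {ω | U ω > 0} := by
    ext ω
    simp only [mem_iUnion, hA, mem_setOf_eq]
    constructor
    · rintro ⟨n, hn⟩
      have : (0:ℝ) < 1 / (n + 2) := by positivity
      linarith
    · intro h
      obtain ⟨n, hn⟩ := exists_nat_one_div_lt h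
      refine ⟨n, lt_of_le_of_lt ?_ hn⟩
      apply one_div_le_one_div_of_le (by positivity)
      linarith
  have htend := hcb A hmeas hmono
  rw [hunion] at htend
  have hval : ∀ n : ℕ, c (A n) = 1 - 1 / (n + 2) := by
    intro n
    have hmem : (1:ℝ) / (n + 2) ∈ Ioo (0:ℝ) 1 := by
      constructor
      · positivity
      · rw [div_lt_one (by positivity)]
        have : (0:ℝ) ≤ n := Nat.cast_nonneg n
        linarith
    exact tail_mid hc hcont hbot htop hmem
  have htend2 : Tendsto (fun n : ℕ => c (A n)) atTop (nhds 1) := by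
    simp only [hval]
    have : Tendsto (fun n : ℕ => 1 / ((n:ℝ) + 2)) atTop (nhds 0) := by
      apply squeeze_zero (fun n => by positivity)
        (g := fun n : ℕ => 1 / ((n:ℝ) + 1)) ?_
        tendsto_one_div_add_atTop_nhds_zero_nat
      intro n
      apply one_div_le_one_div_of_le (by positivity)
      linarith
    simpa using tendsto_const_nhds.sub this
  exact tendsto_nhds_unique htend htend2

theorem stmt12 {Ω : Type*} [MeasurableSpace Ω] (c : Set Ω → ℝ) (hc : IsCapacity c)
    (hcb : ContFromBelow c) (Z : Ω → ℝ) (hZ : Measurable Z)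
    (hcont : Continuous (distFun c Z))
    (hbot : Filter.Tendsto (distFun c Z) Filter.atBot (nhds 0))
    (htop : Filter.Tendsto (distFun c Z) Filter.atTop (nhds 1))
    (X : Ω → ℝ) (hX : BddMeas X) (hXpos : ∀ ω, 0 ≤ X ω) :
    ∀ x : ℝ, distFun c X x
      = distFun c (fun ω => rminusInf c X (distFun c Z (Z ω))) x := by
  intro x
  have hXmeas := hX.1
  obtain ⟨M, hM⟩ := hX.2
  set s := distFun c X x with hs
  have hs0 : 0 ≤ s := distFun_nonneg hc X x
  have hs1 : s ≤ 1 := distFun_le_one hc X x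
  have hcX : c {ω | X ω > x} = 1 - s := by
    have h : s = 1 - c {ω | X ω > x} := rfl
    linarith
  have hU0 : ∀ ω, 0 ≤ distFun c Z (Z ω) := fun ω => distFun_nonneg hc Z (Z ω)
  have hU1 : ∀ ω, distFun c Z (Z ω) ≤ 1 := fun ω => distFun_le_one hc Z (Z ω)
  -- G y = 0 for y < 0
  have hGneg : ∀ y : ℝ, y < 0 → distFun c X y = 0 := by
    intro y hy
    have : {ω | X ω > y} = univ := eq_univ_of_forall fun ω => lt_of_lt_of_le hy (hXpos ω)
    simp only [distFun, this, hc.2.1, sub_self]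
  suffices h : c {ω | rminusInf c X (distFun c Z (Z ω)) > x} = c {ω | X ω > x} by
    show (1:ℝ) - c {ω | X ω > x} = 1 - c {ω | rminusInf c X (distFun c Z (Z ω)) > x}
    rw [h]
  rcases lt_or_ge x 0 with hx | hx
  · -- x < 0 : both sides equal 1
    have hXuniv : {ω | X ω > x} = univ :=
      eq_univ_of_forall fun ω => lt_of_lt_of_le hx (hXpos ω)
    rw [hXuniv, hc.2.1]
    apply le_antisymm (cap_le_one hc _)
    have hsub : {ω | distFun c Z (Z ω) > 0} ⊆
        {ω | rminusInf c X (distFun c Z (Z ω)) > x} := by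
      intro ω hω
      have ht : (0:ℝ) < distFun c Z (Z ω) := hω
      have hnn : 0 ≤ rminusInf c X (distFun c Z (Z ω)) := by
        apply Real.sInf_nonneg
        intro y hy
        by_contra hy0
        push_neg at hy0
        have := hGneg y hy0
        simp only [mem_setOf_eq, this] at hy
        linarith
      exact lt_of_lt_of_le hx hnn
    calc (1:ℝ) = c {ω | distFun c Z (Z ω) > 0} :=
          (tail_zero hc hcb hZ hcont hbot htop).symm
      _ ≤ _ := hc.2.2 _ _ hsub
  · -- x ≥ 0
    have hkey : {ω | rminusInf c X (distFun c Z (Z ω)) > x}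
        = {ω | distFun c Z (Z ω) > s} := by
      ext ω
      set t := distFun c Z (Z ω) with ht
      simp only [mem_setOf_eq]
      rcases eq_or_lt_of_le (hU0 ω) with ht0 | ht0
      · -- t = 0
        have hSuniv : {y : ℝ | t ≤ distFun c X y} = univ := by
          apply eq_univ_of_forall
          intro y
          show t ≤ distFun c X y
          rw [ht, ← ht0]
          exact distFun_nonneg hc X y
        have : rminusInf c X t = 0 := by
          rw [rminusInf, hSuniv, csInf_of_not_bddBelow not_bddBelow_univ,
            Real.sInf_empty]
        rw [this]
        constructor
        · intro h; linarith
        · intro h; linarith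
      · -- 0 < t
        have hne : Set.Nonempty {y : ℝ | t ≤ distFun c X y} := by
          refine ⟨M, ?_⟩
          have hempty : {ω | X ω > M} = ∅ := by
            ext ω'
            simp only [mem_setOf_eq, mem_empty_iff_false, iff_false, not_lt]
            exact (abs_le.mp (hM ω')).2
          have : distFun c X M = 1 := by
            simp only [distFun, hempty, hc.1, sub_zero]
          simp only [mem_setOf_eq, this]
          rw [ht]
          exact distFun_le_one hc Z (Z ω)
        have hbdd : BddBelow {y : ℝ | t ≤ distFun c X y} := by
          refine ⟨0, fun y hy => ?_⟩
          by_contra hy0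
          push_neg at hy0
          have := hGneg y hy0
          simp only [mem_setOf_eq, this] at hy
          linarith
        constructor
        · intro hr
          by_contra hts
          push_neg at hts
          have hxmem : x ∈ {y : ℝ | t ≤ distFun c X y} := hts
          have := csInf_le hbdd hxmem
          rw [rminusInf] at hr
          linarith
        · intro hts
          by_contra hr
          push_neg at hr
          rw [rminusInf] at hr
          have : t ≤ distFun c X x := by
            apply le_distFun_of_gt hcb hXmeas
            intro y hy
            obtain ⟨z, hz, hzy⟩ := (csInf_lt_iff hbdd hne).mp (lt_of_le_of_lt hr hy)
            exact le_trans hz (distFun_mono hc X hzy.le)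
          rw [← hs] at this
          linarith
    rw [hkey, hcX]
    rcases eq_or_lt_of_le hs1 with hseq | hslt
    · -- s = 1
      have : {ω | distFun c Z (Z ω) > s} = ∅ := by
        ext ω
        simp only [mem_setOf_eq, mem_empty_iff_false, iff_false, not_lt, hseq]
        exact hU1 ω
      rw [this, hc.1, ← hseq]
      norm_num
    · rcases eq_or_lt_of_le hs0 with hseq0 | hslt0
      · rw [← hseq0]
        simpa using tail_zero hc hcb hZ hcont hbot htop
      · exact tail_mid hc hcont hbot htop ⟨hslt0, hslt⟩
end

section
/- Let c be a continuous-from-below capacity on (Ω,F) satisfying the richness assumption (existence of Z with continuous distribution function G_Z with limits 0 and 1 at ∓∞), let G ⊆ F be a sub-σ-algebra, and let φ^G be a G-random distortion function. If X, Y ∈ χ(F) are comonotonic, then E_{φ^G∘c}(X+Y)(ω) = E_{φ^G∘c}(X)(ω) + E_{φ^G∘c}(Y)(ω) for all ω ∈ Ω. -/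
open MeasureTheory Set Filter Topology

section CqAuxSec
namespace CqAux

variable {Ω : Type*}

noncomputable def cqQ (ν : Set Ω → ℝ) (W : Ω → ℝ) (t : ℝ) : ℝ :=
  sSup {x : ℝ | t < ν {ω | W ω > x}}

noncomputable def cqR (ν : Set Ω → ℝ) (W : Ω → ℝ) (t : ℝ) : ℝ :=
  sInf {x : ℝ | ν {ω | W ω > x} < t}

noncomputable def cqQB (ν : Set Ω → ℝ) (W : Ω → ℝ) (b t : ℝ) : ℝ :=
  sSup (({x : ℝ | t < ν {ω | W ω > x}} ∩ Set.Iic b) ∪ {-b})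

variable {ν : Set Ω → ℝ} {W X Y : Ω → ℝ} {b bX bY : ℝ}

theorem F_antitone (hm : ∀ A B : Set Ω, A ⊆ B → ν A ≤ ν B) :
    Antitone (fun x => ν {ω | W ω > x}) := by
  intro x y hxy
  exact hm _ _ (fun ω hw => lt_of_le_of_lt hxy hw)

theorem F_nonneg (hm : ∀ A B : Set Ω, A ⊆ B → ν A ≤ ν B) (h0 : ν ∅ = 0) (x : ℝ) :
    0 ≤ ν {ω | W ω > x} := by
  have := hm ∅ {ω | W ω > x} (empty_subset _)
  rwa [h0] at this

theorem F_le_one (hm : ∀ A B : Set Ω, A ⊆ B → ν A ≤ ν B) (h1 : ν Set.univ = 1) (x : ℝ) :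
    ν {ω | W ω > x} ≤ 1 := by
  have := hm {ω | W ω > x} univ (subset_univ _)
  rwa [h1] at this

theorem F_zero (h0 : ν ∅ = 0) (hb : ∀ ω, |W ω| < b) {x : ℝ} (hx : b ≤ x) :
    ν {ω | W ω > x} = 0 := by
  have h : {ω | W ω > x} = ∅ := by
    ext ω
    simp only [mem_setOf_eq, mem_empty_iff_false, iff_false, not_lt]
    exact le_trans (le_trans (le_abs_self _) (hb ω).le) hx
  rw [h, h0]

theorem F_one (h1 : ν Set.univ = 1) (hb : ∀ ω, |W ω| < b) {x : ℝ} (hx : x ≤ -b) :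
    ν {ω | W ω > x} = 1 := by
  have h : {ω | W ω > x} = univ := by
    ext ω
    simp only [mem_setOf_eq, mem_univ, iff_true]
    have := (abs_lt.mp (hb ω)).1
    linarith
  rw [h, h1]

/-- `-b` belongs to the upper-level set when `t < 1`. -/
theorem neg_b_mem (h1 : ν Set.univ = 1) (hb : ∀ ω, |W ω| < b) {t : ℝ} (ht : t < 1) :
    -b ∈ {x : ℝ | t < ν {ω | W ω > x}} := by
  simp only [mem_setOf_eq, F_one h1 hb (le_refl (-b))]
  exact ht

theorem q_set_nonempty (h1 : ν Set.univ = 1) (hb : ∀ ω, |W ω| < b) {t : ℝ} (ht : t < 1) :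
    {x : ℝ | t < ν {ω | W ω > x}}.Nonempty :=
  ⟨-b, neg_b_mem h1 hb ht⟩

theorem q_set_subset (h0 : ν ∅ = 0) (hb : ∀ ω, |W ω| < b) {t : ℝ} (ht : 0 < t) :
    {x : ℝ | t < ν {ω | W ω > x}} ⊆ Iio b := by
  intro x hx
  simp only [mem_setOf_eq] at hx
  by_contra hxb
  rw [F_zero h0 hb (not_lt.mp (fun h => hxb (mem_Iio.mpr h)))] at hx
  exact absurd hx (not_lt.mpr ht.le)

theorem q_set_bddAbove (h0 : ν ∅ = 0) (hb : ∀ ω, |W ω| < b) {t : ℝ} (ht : 0 < t) :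
    BddAbove {x : ℝ | t < ν {ω | W ω > x}} :=
  ⟨b, fun x hx => (q_set_subset h0 hb ht hx).le⟩

theorem le_cqQ (h0 : ν ∅ = 0) (hb : ∀ ω, |W ω| < b) {t x : ℝ} (ht : 0 < t)
    (hx : t < ν {ω | W ω > x}) : x ≤ cqQ ν W t :=
  le_csSup (q_set_bddAbove h0 hb ht) hx

theorem cqQ_lt (h0 : ν ∅ = 0) (hb : ∀ ω, |W ω| < b) {t x : ℝ} (ht : 0 < t)
    (hx : cqQ ν W t < x) : ν {ω | W ω > x} ≤ t := by
  by_contra h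
  push_neg at h
  exact absurd (le_cqQ h0 hb ht h) (not_le.mpr hx)

theorem lt_cqQ (hm : ∀ A B : Set Ω, A ⊆ B → ν A ≤ ν B) (h1 : ν Set.univ = 1)
    (hb : ∀ ω, |W ω| < b) {t x : ℝ} (ht : t < 1) (hx : x < cqQ ν W t) :
    t < ν {ω | W ω > x} := by
  obtain ⟨y, hy, hxy⟩ := exists_lt_of_lt_csSup (q_set_nonempty h1 hb ht) hx
  exact lt_of_lt_of_le hy (F_antitone hm hxy.le)

theorem cqQ_mem_Icc (hm : ∀ A B : Set Ω, A ⊆ B → ν A ≤ ν B) (h0 : ν ∅ = 0)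
    (h1 : ν Set.univ = 1) (hb : ∀ ω, |W ω| < b) {t : ℝ} (ht : t ∈ Ioo (0:ℝ) 1) :
    cqQ ν W t ∈ Icc (-b) b := by
  constructor
  · exact le_csSup (q_set_bddAbove h0 hb ht.1) (neg_b_mem h1 hb ht.2)
  · exact csSup_le (q_set_nonempty h1 hb ht.2) (fun x hx => (q_set_subset h0 hb ht.1 hx).le)

/- r-side -/

theorem r_set_nonempty (h0 : ν ∅ = 0) (hb : ∀ ω, |W ω| < b) {t : ℝ} (ht : 0 < t) :
    {x : ℝ | ν {ω | W ω > x} < t}.Nonempty := by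
  refine ⟨b, ?_⟩
  simp only [mem_setOf_eq, F_zero h0 hb (le_refl b)]
  exact ht

theorem r_set_bddBelow (h1 : ν Set.univ = 1) (hb : ∀ ω, |W ω| < b) {t : ℝ} (ht : t < 1) :
    BddBelow {x : ℝ | ν {ω | W ω > x} < t} := by
  refine ⟨-b, fun x hx => ?_⟩
  simp only [mem_setOf_eq] at hx
  by_contra hxb
  push_neg at hxb
  rw [F_one h1 hb hxb.le] at hx
  exact absurd hx (not_lt.mpr ht.le)

theorem cqR_le (h1 : ν Set.univ = 1) (hb : ∀ ω, |W ω| < b) {t x : ℝ} (ht : t < 1)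
    (hx : ν {ω | W ω > x} < t) : cqR ν W t ≤ x :=
  csInf_le (r_set_bddBelow h1 hb ht) hx

theorem lt_cqR (h1 : ν Set.univ = 1) (hb : ∀ ω, |W ω| < b) {t x : ℝ} (ht : t < 1)
    (hx : x < cqR ν W t) : t ≤ ν {ω | W ω > x} := by
  by_contra h
  push_neg at h
  exact absurd (cqR_le h1 hb ht h) (not_le.mpr hx)

theorem cqR_lt (hm : ∀ A B : Set Ω, A ⊆ B → ν A ≤ ν B) (h0 : ν ∅ = 0)
    (hb : ∀ ω, |W ω| < b) {t x : ℝ} (ht : 0 < t) (hx : cqR ν W t < x) :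
    ν {ω | W ω > x} < t := by
  obtain ⟨y, hy, hxy⟩ := exists_lt_of_csInf_lt (r_set_nonempty h0 hb ht) hx
  exact lt_of_le_of_lt (F_antitone hm hxy.le) hy

theorem cqR_mem_Icc (hm : ∀ A B : Set Ω, A ⊆ B → ν A ≤ ν B) (h0 : ν ∅ = 0)
    (h1 : ν Set.univ = 1) (hb : ∀ ω, |W ω| < b) {t : ℝ} (ht : t ∈ Ioo (0:ℝ) 1) :
    cqR ν W t ∈ Icc (-b) b := by
  constructor
  · exact le_csInf (r_set_nonempty h0 hb ht.1) (fun x hx => by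
      by_contra h
      push_neg at h
      have := F_one h1 hb (le_of_lt h)
      simp only [mem_setOf_eq, this] at hx
      exact absurd hx (not_lt.mpr ht.2.le))
  · refine csInf_le (r_set_bddBelow h1 hb ht.2) ?_
    simp only [mem_setOf_eq, F_zero h0 hb (le_refl b)]
    exact ht.1

theorem cqQ_le_cqR (hm : ∀ A B : Set Ω, A ⊆ B → ν A ≤ ν B) (h0 : ν ∅ = 0)
    (h1 : ν Set.univ = 1) (hb : ∀ ω, |W ω| < b) {t : ℝ} (ht : t ∈ Ioo (0:ℝ) 1) :
    cqQ ν W t ≤ cqR ν W t := by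
  by_contra h
  push_neg at h
  obtain ⟨x, hx1, hx2⟩ := exists_between h
  have h1' := cqR_lt hm h0 hb ht.1 hx1
  have h2' := lt_cqQ hm h1 hb ht.2 hx2
  linarith

theorem F_eq_on_Ioo (hm : ∀ A B : Set Ω, A ⊆ B → ν A ≤ ν B) (h0 : ν ∅ = 0)
    (h1 : ν Set.univ = 1) (hb : ∀ ω, |W ω| < b) {t x : ℝ} (ht : t ∈ Ioo (0:ℝ) 1)
    (hx : x ∈ Ioo (cqQ ν W t) (cqR ν W t)) : ν {ω | W ω > x} = t :=
  le_antisymm (cqQ_lt h0 hb ht.1 hx.1) (lt_cqR h1 hb ht.2 hx.2)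


theorem countable_ne (hm : ∀ A B : Set Ω, A ⊆ B → ν A ≤ ν B) (h0 : ν ∅ = 0)
    (h1 : ν Set.univ = 1) (hb : ∀ ω, |W ω| < b) :
    {t | t ∈ Ioo (0:ℝ) 1 ∧ cqQ ν W t < cqR ν W t}.Countable := by
  set T := {t | t ∈ Ioo (0:ℝ) 1 ∧ cqQ ν W t < cqR ν W t} with hT
  have hrat : ∀ t : T, ∃ ρ : ℚ, (ρ : ℝ) ∈ Ioo (cqQ ν W t.1) (cqR ν W t.1) := by
    intro t
    obtain ⟨ρ, h1', h2'⟩ := exists_rat_btwn t.2.2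
    exact ⟨ρ, h1', h2'⟩
  choose f hf using hrat
  have hinj : Function.Injective f := by
    intro t1 t2 he
    have e1 : ν {ω | W ω > (f t1 : ℝ)} = t1.1 := F_eq_on_Ioo hm h0 h1 hb t1.2.1 (hf t1)
    have e2 : ν {ω | W ω > (f t2 : ℝ)} = t2.1 := F_eq_on_Ioo hm h0 h1 hb t2.2.1 (hf t2)
    rw [he] at e1
    exact Subtype.ext (e1 ▸ e2)
  rw [← Set.countable_coe_iff]
  exact Function.Injective.countable hinj


theorem cqQB_eq_cqQ (h0 : ν ∅ = 0) (h1 : ν Set.univ = 1) (hb : ∀ ω, |W ω| < b)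
    {t : ℝ} (ht : t ∈ Ioo (0:ℝ) 1) : cqQB ν W b t = cqQ ν W t := by
  unfold cqQB cqQ
  congr 1
  apply Subset.antisymm
  · rintro x (hx | hx)
    · exact hx.1
    · rw [mem_singleton_iff] at hx
      rw [hx]
      exact neg_b_mem h1 hb ht.2
  · intro x hx
    exact Or.inl ⟨hx, mem_Iic.mpr (le_of_lt (mem_Iio.mp (q_set_subset h0 hb ht.1 hx)))⟩

theorem cqQB_antitone (hb0 : 0 < b) : Antitone (cqQB ν W b) := by
  intro t1 t2 h12
  apply csSup_le_csSup
  · refine ⟨b, ?_⟩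
    rintro x (hx | hx)
    · exact hx.2
    · rw [mem_singleton_iff] at hx
      rw [hx]; linarith
  · exact ⟨-b, Or.inr rfl⟩
  · rintro x (hx | hx)
    · exact Or.inl ⟨lt_of_le_of_lt h12 hx.1, hx.2⟩
    · exact Or.inr hx

theorem abs_cqQB_le (hb0 : 0 < b) (t : ℝ) : |cqQB ν W b t| ≤ b := by
  rw [abs_le]
  constructor
  · refine le_csSup ⟨b, ?_⟩ (Or.inr rfl)
    rintro x (hx | hx)
    · exact hx.2
    · rw [mem_singleton_iff] at hx; rw [hx]; linarith
  · refine csSup_le ⟨-b, Or.inr rfl⟩ ?_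
    rintro x (hx | hx)
    · exact hx.2
    · rw [mem_singleton_iff] at hx; rw [hx]; linarith

theorem cqQB_integrableOn (hb0 : 0 < b) :
    IntegrableOn (cqQB ν W b) (Ioo (0:ℝ) 1) volume := by
  apply Measure.integrableOn_of_bounded (M := b)
  · rw [Real.volume_Ioo]; exact ENNReal.ofReal_ne_top
  · exact ((cqQB_antitone (ν := ν) (W := W) hb0).measurable).aestronglyMeasurable
  · exact Filter.Eventually.of_forall (fun t => by
      rw [Real.norm_eq_abs]; exact abs_cqQB_le hb0 t)


theorem chain (hcom : Comonotone X Y) (x y : ℝ) :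
    {ω | X ω > x} ⊆ {ω | Y ω > y} ∨ {ω | Y ω > y} ⊆ {ω | X ω > x} := by
  by_contra h
  rw [not_or, Set.not_subset, Set.not_subset] at h
  obtain ⟨⟨ω, hω1, hω2⟩, ⟨ω', hω'1, hω'2⟩⟩ := h
  simp only [mem_setOf_eq, not_lt] at hω1 hω2 hω'1 hω'2
  have := hcom ω ω'
  nlinarith

theorem cqQ_add (hm : ∀ A B : Set Ω, A ⊆ B → ν A ≤ ν B) (h0 : ν ∅ = 0) (h1 : ν Set.univ = 1)
    (hcom : Comonotone X Y) (hbX : ∀ ω, |X ω| < bX) (hbY : ∀ ω, |Y ω| < bY)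
    {t : ℝ} (ht : t ∈ Ioo (0:ℝ) 1) :
    cqQ ν (fun ω => X ω + Y ω) t = cqQ ν X t + cqQ ν Y t := by
  have hbS : ∀ ω, |X ω + Y ω| < bX + bY := fun ω =>
    lt_of_le_of_lt (abs_add_le _ _) (add_lt_add (hbX ω) (hbY ω))
  apply le_antisymm
  -- ≤ : every z in the level set of the sum is ≤ qX + qY
  · refine csSup_le (q_set_nonempty h1 hbS ht.2) (fun z hz => ?_)
    simp only [mem_setOf_eq] at hz
    by_contra hgt
    push_neg at hgt
    set ε := z - (cqQ ν X t + cqQ ν Y t) with hε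
    have hε0 : 0 < ε := by simp [hε]; linarith
    set x := cqQ ν X t + ε / 2 with hx
    set y := cqQ ν Y t + ε / 2 with hy
    have hxy : x + y = z := by simp [hx, hy, hε]; ring
    have hFx : ν {ω | X ω > x} ≤ t := cqQ_lt (b := bX) h0 hbX ht.1 (by simp [hx]; linarith)
    have hFy : ν {ω | Y ω > y} ≤ t := cqQ_lt (b := bY) h0 hbY ht.1 (by simp [hy]; linarith)
    have hsub : {ω | X ω + Y ω > z} ⊆ {ω | X ω > x} ∪ {ω | Y ω > y} := by
      intro ω hω
      simp only [mem_setOf_eq] at hω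
      by_contra hc
      simp only [mem_union, mem_setOf_eq, not_or, not_lt] at hc
      have := hc.1; have := hc.2
      linarith
    rcases chain hcom x y with hch | hch
    · have : {ω | X ω > x} ∪ {ω | Y ω > y} = {ω | Y ω > y} := union_eq_self_of_subset_left hch
      rw [this] at hsub
      exact absurd (lt_of_lt_of_le hz (hm _ _ hsub)) (not_lt.mpr hFy)
    · have : {ω | X ω > x} ∪ {ω | Y ω > y} = {ω | X ω > x} := union_eq_self_of_subset_right hch
      rw [this] at hsub
      exact absurd (lt_of_lt_of_le hz (hm _ _ hsub)) (not_lt.mpr hFx)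
  -- ≥
  · have key : ∀ x ∈ {x : ℝ | t < ν {ω | X ω > x}}, ∀ y ∈ {y : ℝ | t < ν {ω | Y ω > y}},
        x + y ≤ cqQ ν (fun ω => X ω + Y ω) t := by
      intro x hx y hy
      simp only [mem_setOf_eq] at hx hy
      have hsub : {ω | X ω > x} ∩ {ω | Y ω > y} ⊆ {ω | X ω + Y ω > x + y} := by
        intro ω hω
        simp only [mem_inter_iff, mem_setOf_eq] at hω ⊢
        exact add_lt_add hω.1 hω.2
      have hFS : t < ν {ω | X ω + Y ω > x + y} := by
        rcases chain hcom x y with hch | hch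
        · have : {ω | X ω > x} ∩ {ω | Y ω > y} = {ω | X ω > x} := inter_eq_self_of_subset_left hch
          rw [this] at hsub
          exact lt_of_lt_of_le hx (hm _ _ hsub)
        · have : {ω | X ω > x} ∩ {ω | Y ω > y} = {ω | Y ω > y} :=
            inter_eq_self_of_subset_right hch
          rw [this] at hsub
          exact lt_of_lt_of_le hy (hm _ _ hsub)
      exact le_cqQ (b := bX + bY) h0 hbS ht.1 hFS
    have h2' : ∀ x ∈ {x : ℝ | t < ν {ω | X ω > x}}, cqQ ν Y t ≤ cqQ ν (fun ω => X ω + Y ω) t - x :=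
      fun x hx => csSup_le (q_set_nonempty h1 hbY ht.2) (fun y hy => by
        have := key x hx y hy; linarith)
    have h1' : cqQ ν X t ≤ cqQ ν (fun ω => X ω + Y ω) t - cqQ ν Y t :=
      csSup_le (q_set_nonempty h1 hbX ht.2) (fun x hx => by have := h2' x hx; linarith)
    unfold cqQ at h1' ⊢
    linarith

theorem toReal_ofReal_max (a : ℝ) : (ENNReal.ofReal a).toReal = max a 0 := by
  rcases le_total a 0 with h | h
  · rw [ENNReal.ofReal_of_nonpos h, ENNReal.toReal_zero, max_eq_right h]
  · rw [ENNReal.toReal_ofReal h, max_eq_left h]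

theorem integral_Ioo01_reflect (h : ℝ → ℝ) :
    ∫ t in Ioo (0:ℝ) 1, h (1 - t) = ∫ t in Ioo (0:ℝ) 1, h t := by
  rw [← integral_Ioc_eq_integral_Ioo, ← integral_Ioc_eq_integral_Ioo,
    ← intervalIntegral.integral_of_le zero_le_one, ← intervalIntegral.integral_of_le zero_le_one]
  have key := intervalIntegral.integral_comp_sub_left (a := (0:ℝ)) (b := 1) h 1
  simp only [sub_self, sub_zero] at key
  exact key

theorem choquet_rep (hm : ∀ A B : Set Ω, A ⊆ B → ν A ≤ ν B) (h0 : ν ∅ = 0)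
    (h1 : ν Set.univ = 1) (hb : ∀ ω, |W ω| < b) (hb0 : 0 < b) :
    (∫ x in Ioi (0:ℝ), ν {ω | W ω > x}) + (∫ x in Iio (0:ℝ), (ν {ω | W ω > x} - 1))
      = ∫ t in Ioo (0:ℝ) 1, cqQB ν W b t := by
  set F : ℝ → ℝ := fun x => ν {ω | W ω > x} with hF
  have hFmeas : Measurable F := (F_antitone hm).measurable
  have hFset : ∀ t : ℝ, MeasurableSet {x | t < F x} :=
    fun t => measurableSet_lt measurable_const hFmeas
  have hFnn : ∀ x, 0 ≤ F x := F_nonneg (W := W) hm h0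
  have hFle1 : ∀ x, F x ≤ 1 := F_le_one (W := W) hm h1
  have hFz : ∀ x : ℝ, b ≤ x → F x = 0 := fun x hx => F_zero h0 hb hx
  have hFo : ∀ x : ℝ, x ≤ -b → F x = 1 := fun x hx => F_one h1 hb hx
  -- Part A
  have hIntA : IntegrableOn F (Ioi 0) volume := by
    rw [← Ioc_union_Ioi_eq_Ioi hb0.le]
    refine IntegrableOn.union ?_ ?_
    · refine Measure.integrableOn_of_bounded (M := 1)
        (by rw [Real.volume_Ioc]; exact ENNReal.ofReal_ne_top)
        hFmeas.aestronglyMeasurable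
        (Filter.Eventually.of_forall fun x => ?_)
      rw [Real.norm_eq_abs, abs_le]
      exact ⟨by linarith [hFnn x], hFle1 x⟩
    · exact (integrableOn_zero (ε' := ℝ)).congr_fun
        (fun x hx => (hFz x (le_of_lt hx)).symm) measurableSet_Ioi
  have keyA := Integrable.integral_eq_integral_meas_lt hIntA
    (Filter.Eventually.of_forall hFnn)
  have hmeasA : ∀ t ∈ Ioo (0:ℝ) 1,
      (volume.restrict (Ioi 0)) {x | t < F x} = ENNReal.ofReal (cqQ ν W t) := by
    intro t ht
    rw [Measure.restrict_apply (hFset t)]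
    apply le_antisymm
    · calc volume ({x | t < F x} ∩ Ioi 0) ≤ volume (Ioc 0 (cqQ ν W t)) :=
            measure_mono (fun x hx => ⟨hx.2, le_cqQ h0 hb ht.1 hx.1⟩)
      _ = ENNReal.ofReal (cqQ ν W t) := by rw [Real.volume_Ioc, sub_zero]
    · calc ENNReal.ofReal (cqQ ν W t) = volume (Ioo 0 (cqQ ν W t)) := by
            rw [Real.volume_Ioo, sub_zero]
      _ ≤ volume ({x | t < F x} ∩ Ioi 0) :=
            measure_mono (fun x hx => ⟨lt_cqQ hm h1 hb ht.2 hx.2, hx.1⟩)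
  have hA : (∫ x in Ioi (0:ℝ), F x) = ∫ t in Ioo (0:ℝ) 1, max (cqQ ν W t) 0 := by
    rw [keyA]
    rw [setIntegral_eq_of_subset_of_ae_diff_eq_zero nullMeasurableSet_Ioi
      Ioo_subset_Ioi_self (Filter.Eventually.of_forall (fun t htd => ?_))]
    · exact setIntegral_congr_fun measurableSet_Ioo
        (fun t ht => by rw [measureReal_def, hmeasA t ht, toReal_ofReal_max])
    · have ht1 : (1:ℝ) ≤ t := by
        rcases htd with ⟨ht0, htn⟩
        by_contra hlt
        exact htn ⟨ht0, not_le.mp hlt⟩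
      have hemp : {x | t < F x} = ∅ := by
        apply eq_empty_iff_forall_notMem.mpr
        intro x hx
        exact absurd (lt_of_lt_of_le hx (hFle1 x)) (not_lt.mpr ht1)
      rw [hemp]
      simp
  -- Part B
  have hgnn : ∀ x : ℝ, 0 ≤ 1 - F x := fun x => by linarith [hFle1 x]
  have hIntB : IntegrableOn (fun x => 1 - F x) (Iio 0) volume := by
    rw [← Iio_union_Ico_eq_Iio (neg_nonpos.mpr hb0.le)]
    refine IntegrableOn.union ?_ ?_
    · exact (integrableOn_zero (ε' := ℝ)).congr_fun
        (fun x hx => by rw [hFo x (le_of_lt hx)]; ring) measurableSet_Iio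
    · refine Measure.integrableOn_of_bounded (M := 1)
        (by rw [Real.volume_Ico]; exact ENNReal.ofReal_ne_top)
        (measurable_const.sub hFmeas).aestronglyMeasurable
        (Filter.Eventually.of_forall fun x => ?_)
      rw [Real.norm_eq_abs, abs_le]
      exact ⟨by linarith [hFle1 x], by linarith [hFnn x]⟩
  have keyB := Integrable.integral_eq_integral_meas_lt hIntB
    (Filter.Eventually.of_forall hgnn)
  have hsetB : ∀ t : ℝ, {x | t < 1 - F x} = {x | F x < 1 - t} := by
    intro t
    ext x
    simp only [mem_setOf_eq]
    constructor <;> intro <;> linarith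
  have hmeasB : ∀ t ∈ Ioo (0:ℝ) 1,
      (volume.restrict (Iio 0)) {x | t < 1 - F x} = ENNReal.ofReal (-(cqR ν W (1 - t))) := by
    intro t ht
    have hs : (1 - t) ∈ Ioo (0:ℝ) 1 := ⟨by linarith [ht.2], by linarith [ht.1]⟩
    rw [hsetB t, Measure.restrict_apply (measurableSet_lt hFmeas measurable_const)]
    apply le_antisymm
    · calc volume ({x | F x < 1 - t} ∩ Iio 0) ≤ volume (Ico (cqR ν W (1 - t)) 0) :=
            measure_mono (fun x hx => ⟨cqR_le h1 hb hs.2 hx.1, hx.2⟩)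
      _ = ENNReal.ofReal (-(cqR ν W (1 - t))) := by rw [Real.volume_Ico, zero_sub]
    · calc ENNReal.ofReal (-(cqR ν W (1 - t)))
          = volume (Ioo (cqR ν W (1 - t)) 0) := by rw [Real.volume_Ioo, zero_sub]
      _ ≤ volume ({x | F x < 1 - t} ∩ Iio 0) :=
            measure_mono (fun x hx => ⟨cqR_lt hm h0 hb hs.1 hx.1, hx.2⟩)
  have hB : (∫ x in Iio (0:ℝ), (1 - F x)) = ∫ t in Ioo (0:ℝ) 1, max (-(cqR ν W t)) 0 := by
    rw [keyB]
    rw [setIntegral_eq_of_subset_of_ae_diff_eq_zero nullMeasurableSet_Ioi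
      Ioo_subset_Ioi_self (Filter.Eventually.of_forall (fun t htd => ?_))]
    · rw [setIntegral_congr_fun measurableSet_Ioo
        (g := fun t => max (-(cqR ν W (1 - t))) 0)
        (fun t ht => by rw [measureReal_def, hmeasB t ht, toReal_ofReal_max])]
      exact integral_Ioo01_reflect (fun s => max (-(cqR ν W s)) 0)
    · have ht1 : (1:ℝ) ≤ t := by
        rcases htd with ⟨ht0, htn⟩
        by_contra hlt
        exact htn ⟨ht0, not_le.mp hlt⟩
      have hemp : {x | t < 1 - F x} = ∅ := by
        apply eq_empty_iff_forall_notMem.mpr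
        intro x hx
        simp only [mem_setOf_eq] at hx
        have := hFnn x
        linarith
      rw [hemp]
      simp
  -- a.e. identification with cqQB
  have hTnull : volume {t | t ∈ Ioo (0:ℝ) 1 ∧ cqQ ν W t < cqR ν W t} = 0 :=
    (countable_ne hm h0 h1 hb).measure_zero _
  have haeQR : ∀ᵐ t ∂(volume.restrict (Ioo (0:ℝ) 1)), cqQ ν W t = cqR ν W t ∧ t ∈ Ioo (0:ℝ) 1 := by
    filter_upwards [ae_restrict_mem measurableSet_Ioo,
      ae_restrict_of_ae (measure_eq_zero_iff_ae_notMem.mp hTnull)] with t htm htn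
    refine ⟨?_, htm⟩
    rcases eq_or_lt_of_le (cqQ_le_cqR hm h0 h1 hb htm) with h | h
    · exact h
    · exact absurd ⟨htm, h⟩ htn
  have hBB : (∫ t in Ioo (0:ℝ) 1, max (-(cqR ν W t)) 0)
      = ∫ t in Ioo (0:ℝ) 1, max (-(cqQB ν W b t)) 0 := by
    refine integral_congr_ae ?_
    filter_upwards [haeQR] with t ht
    rw [← ht.1, cqQB_eq_cqQ h0 h1 hb ht.2]
  have hAA : (∫ t in Ioo (0:ℝ) 1, max (cqQ ν W t) 0)
      = ∫ t in Ioo (0:ℝ) 1, max (cqQB ν W b t) 0 :=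
    setIntegral_congr_fun measurableSet_Ioo
      (fun t ht => by rw [cqQB_eq_cqQ h0 h1 hb ht])
  -- negative-part rewriting
  have hneg : (∫ x in Iio (0:ℝ), (F x - 1)) = -(∫ x in Iio (0:ℝ), (1 - F x)) := by
    rw [← integral_neg]
    exact setIntegral_congr_fun measurableSet_Iio (fun x _ => by ring)
  -- final assembly
  have int1 : IntegrableOn (fun t => max (cqQB ν W b t) 0) (Ioo (0:ℝ) 1) volume :=
    (cqQB_integrableOn hb0).pos_part
  have int2 : IntegrableOn (fun t => max (-(cqQB ν W b t)) 0) (Ioo (0:ℝ) 1) volume :=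
    ((cqQB_integrableOn hb0).neg).pos_part
  calc (∫ x in Ioi (0:ℝ), F x) + (∫ x in Iio (0:ℝ), (F x - 1))
      = (∫ t in Ioo (0:ℝ) 1, max (cqQB ν W b t) 0)
        - ∫ t in Ioo (0:ℝ) 1, max (-(cqQB ν W b t)) 0 := by
        rw [hneg, hA, hAA, hB, hBB]; ring
    _ = ∫ t in Ioo (0:ℝ) 1, (max (cqQB ν W b t) 0 - max (-(cqQB ν W b t)) 0) :=
        (integral_sub int1 int2).symm
    _ = ∫ t in Ioo (0:ℝ) 1, cqQB ν W b t :=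
        setIntegral_congr_fun measurableSet_Ioo
          (fun t _ => max_zero_sub_max_neg_zero_eq_self _)


end CqAux
end CqAuxSec

theorem stmt13 {Ω : Type*} [mF : MeasurableSpace Ω] (mG : MeasurableSpace Ω) (hG : mG ≤ mF)
    (c : Set Ω → ℝ) (hc : IsCapacity c) (hcb : ContFromBelow c) (hrich : Rich c)
    (φ : Ω → ℝ → ℝ) (hφ : IsRandDistortion mG φ)
    (X Y : Ω → ℝ) (hX : BddMeas X) (hY : BddMeas Y) (hcom : Comonotone X Y) :
    ∀ ω, rdChoquet φ c (fun ω' => X ω' + Y ω') ω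
      = rdChoquet φ c X ω + rdChoquet φ c Y ω := by
  intro ω
  obtain ⟨hXm, MX, hMX⟩ := hX
  obtain ⟨hYm, MY, hMY⟩ := hY
  obtain ⟨hc0, hc1, hcm⟩ := hc
  obtain ⟨hφ0, hφ1, hφmono, hφmem, hφmeas⟩ := hφ
  set ν : Set Ω → ℝ := fun A => φ ω (c A) with hν
  have hcIcc : ∀ A : Set Ω, c A ∈ Set.Icc (0:ℝ) 1 := fun A =>
    ⟨hc0 ▸ hcm ∅ A (Set.empty_subset A), hc1 ▸ hcm A Set.univ (Set.subset_univ A)⟩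
  have hm : ∀ A B : Set Ω, A ⊆ B → ν A ≤ ν B := fun A B hAB =>
    hφmono ω (hcIcc A) (hcIcc B) (hcm A B hAB)
  have h0 : ν ∅ = 0 := by
    show φ ω (c ∅) = 0
    rw [hc0]; exact hφ0 ω
  have h1 : ν Set.univ = 1 := by
    show φ ω (c Set.univ) = 1
    rw [hc1]; exact hφ1 ω
  set bX : ℝ := |MX| + 1 with hbXdef
  set bY : ℝ := |MY| + 1 with hbYdef
  have hbX : ∀ ω', |X ω'| < bX := fun ω' =>
    lt_of_le_of_lt (le_trans (hMX ω') (le_abs_self MX)) (by rw [hbXdef]; linarith)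
  have hbY : ∀ ω', |Y ω'| < bY := fun ω' =>
    lt_of_le_of_lt (le_trans (hMY ω') (le_abs_self MY)) (by rw [hbYdef]; linarith)
  have hbX0 : 0 < bX := by rw [hbXdef]; positivity
  have hbY0 : 0 < bY := by rw [hbYdef]; positivity
  have hbS : ∀ ω', |X ω' + Y ω'| < bX + bY := fun ω' =>
    lt_of_le_of_lt (abs_add_le _ _) (add_lt_add (hbX ω') (hbY ω'))
  have hbS0 : 0 < bX + bY := by linarith
  have eqX : rdChoquet φ c X ω
      = (∫ x in Set.Ioi (0:ℝ), ν {ω' | X ω' > x})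
        + (∫ x in Set.Iio (0:ℝ), (ν {ω' | X ω' > x} - 1)) := rfl
  have eqY : rdChoquet φ c Y ω
      = (∫ x in Set.Ioi (0:ℝ), ν {ω' | Y ω' > x})
        + (∫ x in Set.Iio (0:ℝ), (ν {ω' | Y ω' > x} - 1)) := rfl
  have eqS : rdChoquet φ c (fun ω' => X ω' + Y ω') ω
      = (∫ x in Set.Ioi (0:ℝ), ν {ω' | X ω' + Y ω' > x})
        + (∫ x in Set.Iio (0:ℝ), (ν {ω' | X ω' + Y ω' > x} - 1)) := rfl
  rw [eqX, eqY, eqS,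
    CqAux.choquet_rep (W := fun ω' => X ω' + Y ω') hm h0 h1 hbS hbS0,
    CqAux.choquet_rep (W := X) hm h0 h1 hbX hbX0,
    CqAux.choquet_rep (W := Y) hm h0 h1 hbY hbY0,
    ← MeasureTheory.integral_add (CqAux.cqQB_integrableOn hbX0)
      (CqAux.cqQB_integrableOn hbY0)]
  refine MeasureTheory.setIntegral_congr_fun measurableSet_Ioo (fun t ht => ?_)
  rw [CqAux.cqQB_eq_cqQ h0 h1 hbS ht, CqAux.cqQB_eq_cqQ h0 h1 hbX ht,
    CqAux.cqQB_eq_cqQ h0 h1 hbY ht]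
  exact CqAux.cqQ_add hm h0 h1 hcom hbX hbY ht
end

section
/- Representation theorem: Let c be a continuous-from-below capacity on (Ω,F) satisfying the richness assumption (existence of Z with continuous distribution function with limits 0 and 1 at ∓∞), and let ρ : χ(F) → χ(G) be a conditional risk measure that is (i) monotone with respect to first-order stochastic dominance with respect to c, (ii) comonotonic additive, (iii) translation invariant, and (iv) positively homogeneous. Then there exists a G-random distortion function φ^G such that ρ(X) = E_{φ^G∘c}(X) for all X ∈ χ(F). -/
open MeasureTheory Set Filter Topology

open scoped Classical

noncomputable def Ifun (g : ℝ → ℝ) : ℝ :=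
  (∫ x in Set.Ioi (0:ℝ), g x) + ∫ x in Set.Iio (0:ℝ), (g x - 1)

lemma myIntOn (f : ℝ → ℝ) (C : ℝ) (hm : Measurable f) (hb : ∀ x, |f x| ≤ C) (s : Set ℝ)
    (hv : volume s ≠ ⊤) : IntegrableOn f s := by
  refine Integrable.mono' (g := fun _ => C) ((integrableOn_const_iff).2 (Or.inr hv.lt_top))
    hm.aestronglyMeasurable.restrict ?_
  exact Filter.Eventually.of_forall fun x => by simpa using hb x

lemma myII (f : ℝ → ℝ) (C : ℝ) (hm : Measurable f) (hb : ∀ x, |f x| ≤ C) (a b : ℝ) :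
    IntervalIntegrable f volume a b :=
  (intervalIntegrable_iff).2 (myIntOn f C hm hb _ (by rw [Set.uIoc]; exact (measure_Ioc_lt_top).ne))

lemma const_on_Ioo (f : ℝ → ℝ) (a b C : ℝ) (hab : a ≤ b) (h : ∀ x ∈ Set.Ioo a b, f x = C) :
    ∫ x in a..b, f x = (b - a) * C := by
  have e1 : ∫ x in a..b, f x = ∫ x in Set.Ioo a b, f x := by
    rw [intervalIntegral.integral_of_le hab, MeasureTheory.integral_Ioc_eq_integral_Ioo]
  rw [e1, MeasureTheory.setIntegral_congr_fun measurableSet_Ioo h]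
  simp [Real.volume_Ioo, ENNReal.toReal_ofReal, hab]

lemma Ifun_eq (g : ℝ → ℝ) (a b : ℝ) (hab : a ≤ b) (hm : Measurable g) (hbd : ∀ x, |g x| ≤ 1)
    (h1 : ∀ x, x < a → g x = 1) (h0 : ∀ x, b ≤ x → g x = 0) :
    Ifun g = a + ∫ x in a..b, g x := by
  set c0 := min a 0 with hc0
  set d0 := max b 0 with hd0
  have hc0a : c0 ≤ a := min_le_left _ _
  have hc00 : c0 ≤ 0 := min_le_right _ _
  have hbd0 : b ≤ d0 := le_max_left _ _
  have h0d0 : (0:ℝ) ≤ d0 := le_max_right _ _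
  have hii : ∀ u v : ℝ, IntervalIntegrable g volume u v := myII g 1 hm hbd
  have e1 : ∫ x in Set.Ioi (0:ℝ), g x = ∫ x in (0:ℝ)..d0, g x := by
    have hsplit : Set.Ioc (0:ℝ) d0 ∪ Set.Ioi d0 = Set.Ioi (0:ℝ) := Set.Ioc_union_Ioi_eq_Ioi h0d0
    have hzero : ∫ x in Set.Ioi d0, g x = 0 := by
      rw [MeasureTheory.setIntegral_congr_fun measurableSet_Ioi
        (fun x hx => h0 x (hbd0.trans (le_of_lt hx))), integral_zero]
    rw [← hsplit, MeasureTheory.setIntegral_union (Set.Ioc_disjoint_Ioi le_rfl) measurableSet_Ioi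
      (myIntOn g 1 hm hbd _ (measure_Ioc_lt_top).ne)
      ((integrable_zero _ _ _).congr (by
        filter_upwards [MeasureTheory.ae_restrict_mem measurableSet_Ioi] with x hx
        exact (h0 x (hbd0.trans (le_of_lt hx))).symm)),
      hzero, add_zero, intervalIntegral.integral_of_le h0d0]
  have e2 : ∫ x in Set.Iio (0:ℝ), (g x - 1) = (∫ x in c0..(0:ℝ), g x) + c0 := by
    have hsplit : Set.Iio c0 ∪ Set.Ico c0 0 = Set.Iio (0:ℝ) := Set.Iio_union_Ico_eq_Iio hc00
    have hgm1 : Measurable (fun x => g x - 1) := hm.sub measurable_const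
    have hgb : ∀ x, |g x - 1| ≤ 2 := fun x => by
      have := hbd x; rw [abs_le] at this ⊢; constructor <;> linarith [this.1, this.2]
    have hzero : ∫ x in Set.Iio c0, (g x - 1) = 0 := by
      apply MeasureTheory.integral_eq_zero_of_ae
      filter_upwards [MeasureTheory.ae_restrict_mem measurableSet_Iio] with x hx
      simp [h1 x (lt_of_lt_of_le hx hc0a)]
    rw [← hsplit, MeasureTheory.setIntegral_union (μ := volume)
      ((Set.Iio_disjoint_Ici (le_refl c0)).mono_right (show Set.Ico c0 (0:ℝ) ⊆ Set.Ici c0 from Set.Ico_subset_Ici_self)) measurableSet_Ico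
      (show IntegrableOn (fun x => g x - 1) (Set.Iio c0) from (integrable_zero _ _ _).congr (by
        filter_upwards [MeasureTheory.ae_restrict_mem measurableSet_Iio] with x hx
        rw [h1 x (lt_of_lt_of_le hx hc0a)]; simp))
      (myIntOn _ 2 hgm1 hgb _ (by
        have h3 : volume (Set.Ico c0 (0:ℝ)) < ⊤ := measure_Ico_lt_top
        exact h3.ne)),
      hzero, zero_add]
    have e3 : ∫ x in Set.Ico c0 (0:ℝ), (g x - 1) = ∫ x in c0..(0:ℝ), (g x - 1) := by
      rw [MeasureTheory.integral_Ico_eq_integral_Ioo, intervalIntegral.integral_of_le hc00,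
        MeasureTheory.integral_Ioc_eq_integral_Ioo]
    rw [e3, intervalIntegral.integral_sub (hii _ _) (myII _ 1 measurable_const (by norm_num) _ _)]
    simp
  rw [Ifun, e1, e2]
  have e3 : (∫ x in c0..(0:ℝ), g x) + ∫ x in (0:ℝ)..d0, g x = ∫ x in c0..d0, g x :=
    intervalIntegral.integral_add_adjacent_intervals (hii _ _) (hii _ _)
  have e4 : (∫ x in c0..a, g x) + ∫ x in a..d0, g x = ∫ x in c0..d0, g x :=
    intervalIntegral.integral_add_adjacent_intervals (hii _ _) (hii _ _)
  have e5 : (∫ x in a..b, g x) + ∫ x in b..d0, g x = ∫ x in a..d0, g x :=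
    intervalIntegral.integral_add_adjacent_intervals (hii _ _) (hii _ _)
  have e6 : ∫ x in c0..a, g x = (a - c0) * 1 :=
    const_on_Ioo g c0 a 1 hc0a (fun x hx => h1 x hx.2)
  have e7 : ∫ x in b..d0, g x = (d0 - b) * 0 :=
    const_on_Ioo g b d0 0 hbd0 (fun x hx => h0 x (le_of_lt hx.1))
  have e8 : (∫ x in c0..(0:ℝ), g x) + ∫ x in (0:ℝ)..d0, g x
      = (a - c0) * 1 + ((∫ x in a..b, g x) + (d0 - b) * 0) := by
    rw [e3, ← e4, ← e5, e6, e7]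
  linarith [e8]

lemma Ifun_mono (g₁ g₂ : ℝ → ℝ) (a b : ℝ) (hab : a ≤ b)
    (hm₁ : Measurable g₁) (hm₂ : Measurable g₂) (hbd₁ : ∀ x, |g₁ x| ≤ 1) (hbd₂ : ∀ x, |g₂ x| ≤ 1)
    (h11 : ∀ x, x < a → g₁ x = 1) (h10 : ∀ x, b ≤ x → g₁ x = 0)
    (h21 : ∀ x, x < a → g₂ x = 1) (h20 : ∀ x, b ≤ x → g₂ x = 0)
    (hle : ∀ x, g₁ x ≤ g₂ x) : Ifun g₁ ≤ Ifun g₂ := by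
  rw [Ifun_eq g₁ a b hab hm₁ hbd₁ h11 h10, Ifun_eq g₂ a b hab hm₂ hbd₂ h21 h20]
  have := intervalIntegral.integral_mono_on hab (myII g₁ 1 hm₁ hbd₁ a b) (myII g₂ 1 hm₂ hbd₂ a b)
    (fun x _ => hle x)
  linarith

lemma Ifun_step (g : ℝ → ℝ) (hm : Measurable g) (hbd : ∀ x, |g x| ≤ 1)
    (y0 ε : ℝ) (hε : 0 ≤ ε) (n : ℕ) (G : ℕ → ℝ)
    (hstep : ∀ k : ℕ, k < n → ∀ x, y0 + (k : ℝ) * ε ≤ x → x < y0 + ((k : ℝ)+1) * ε → g x = G k)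
    (h1 : ∀ x, x < y0 → g x = 1) (h0 : ∀ x, y0 + (n : ℝ) * ε ≤ x → g x = 0) :
    Ifun g = y0 + ∑ k ∈ Finset.range n, ε * G k := by
  have hy : y0 ≤ y0 + n * ε := by
    have : (0:ℝ) ≤ n * ε := mul_nonneg (Nat.cast_nonneg n) hε
    linarith
  rw [Ifun_eq g y0 (y0 + n * ε) hy hm hbd h1 h0]
  congr 1
  have key : ∀ m : ℕ, m ≤ n → ∫ x in y0..(y0 + m * ε), g x = ∑ k ∈ Finset.range m, ε * G k := by
    intro m hm'
    induction m with
    | zero => simp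
    | succ j ih =>
      have hj : j ≤ n := Nat.le_of_succ_le hm'
      have e1 : (∫ x in y0..(y0 + j * ε), g x) + ∫ x in (y0 + j * ε)..(y0 + (j+1) * ε), g x
          = ∫ x in y0..(y0 + (j+1) * ε), g x :=
        intervalIntegral.integral_add_adjacent_intervals (myII g 1 hm hbd _ _) (myII g 1 hm hbd _ _)
      have e2 : ∫ x in (y0 + j * ε)..(y0 + (j+1) * ε), g x = ε * G j := by
        have hle : y0 + j * ε ≤ y0 + (j+1) * ε := by nlinarith
        rw [const_on_Ioo g _ _ (G j) hle
          (fun x hx => hstep j (Nat.lt_of_succ_le hm') x (le_of_lt hx.1) (by push_cast at hx ⊢; linarith [hx.2]))]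
        push_cast; ring_nf
      rw [Finset.sum_range_succ, ← ih hj, ← e2]
      push_cast at e1 ⊢
      linarith [e1]
  exact key n le_rfl

lemma cap_mem {Ω : Type*} {c : Set Ω → ℝ} (hc : IsCapacity c) (A : Set Ω) :
    c A ∈ Set.Icc (0:ℝ) 1 :=
  ⟨hc.1 ▸ hc.2.2 ∅ A (Set.empty_subset A), hc.2.1 ▸ hc.2.2 A Set.univ (Set.subset_univ A)⟩

lemma cap_abs {Ω : Type*} {c : Set Ω → ℝ} (hc : IsCapacity c) (A : Set Ω) : |c A| ≤ 1 := by
  have h := cap_mem hc A; rw [abs_le]; exact ⟨by linarith [h.1], h.2⟩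

lemma cap_anti {Ω : Type*} {c : Set Ω → ℝ} (hc : IsCapacity c) (X : Ω → ℝ) :
    Antitone (fun x => c {ω | X ω > x}) := by
  intro x y hxy
  exact hc.2.2 _ _ (fun ω h => lt_of_le_of_lt hxy h)

lemma choquet_eq_Ifun {Ω : Type*} {c : Set Ω → ℝ} (X : Ω → ℝ) :
    choquet c X = Ifun (fun x => c {ω | X ω > x}) := rfl

lemma rdChoquet_eq_Ifun {Ω : Type*} (φ : Ω → ℝ → ℝ) (c : Set Ω → ℝ) (X : Ω → ℝ) (ω : Ω) :
    rdChoquet φ c X ω = Ifun (fun x => φ ω (c {ω' | X ω' > x})) := rfl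

lemma choquet_ite {Ω : Type*} {c : Set Ω → ℝ} (hc : IsCapacity c) (A : Set Ω) (a b : ℝ)
    (hab : a ≤ b) :
    choquet c (fun ω => if ω ∈ A then b else a) = a + (b - a) * c A := by
  rw [choquet_eq_Ifun]
  have hstep : ∀ k : ℕ, k < 1 → ∀ x, a + (k : ℝ) * (b - a) ≤ x → x < a + ((k : ℝ)+1) * (b - a) →
      c {ω | (if ω ∈ A then b else a) > x} = c A := by
    intro k hk x hx1 hx2
    have hk0 : k = 0 := by omega
    subst hk0
    simp only [Nat.cast_zero, zero_mul, add_zero] at hx1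
    have hx2' : x < b := by push_cast at hx2; linarith
    congr 1
    ext ω
    simp only [Set.mem_setOf_eq]
    by_cases h : ω ∈ A
    · simp only [if_pos h, h, iff_true]; exact hx2'
    · simp only [if_neg h, h, iff_false]; exact not_lt.2 hx1
  have key := Ifun_step (fun x => c {ω | (if ω ∈ A then b else a) > x})
    ((cap_anti hc _).measurable) (fun x => cap_abs hc _) a (b - a) (by linarith) 1
    (fun _ => c A) hstep
    (fun x hx => by
      have h2 : {ω | (if ω ∈ A then b else a) > x} = Set.univ := by
        ext ω; simp only [Set.mem_setOf_eq, Set.mem_univ, iff_true]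
        by_cases h : ω ∈ A
        · rw [if_pos h]; linarith
        · rw [if_neg h]; linarith
      show c {ω | (if ω ∈ A then b else a) > x} = 1
      rw [h2]; exact hc.2.1)
    (fun x hx => by
      have hx' : b ≤ x := by push_cast at hx; linarith
      have h2 : {ω | (if ω ∈ A then b else a) > x} = ∅ := by
        ext ω; simp only [Set.mem_setOf_eq, Set.mem_empty_iff_false, iff_false, not_lt]
        by_cases h : ω ∈ A
        · rw [if_pos h]; linarith
        · rw [if_neg h]; linarith
      show c {ω | (if ω ∈ A then b else a) > x} = 0
      rw [h2]; exact hc.1)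
  rw [key, Finset.sum_range_one]

noncomputable def ind {Ω : Type*} (A : Set Ω) : Ω → ℝ := fun ω => if ω ∈ A then 1 else 0

lemma ind_meas {Ω : Type*} [MeasurableSpace Ω] {A : Set Ω} (hA : MeasurableSet A) :
    Measurable (ind A) :=
  Measurable.ite hA measurable_const measurable_const

lemma ind_abs {Ω : Type*} (A : Set Ω) (ω : Ω) : |ind A ω| ≤ 1 := by
  rw [ind]; split_ifs <;> norm_num

lemma ind_nonneg {Ω : Type*} (A : Set Ω) (ω : Ω) : 0 ≤ ind A ω := by
  rw [ind]; split_ifs <;> norm_num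

lemma ind_le_one {Ω : Type*} (A : Set Ω) (ω : Ω) : ind A ω ≤ 1 := by
  rw [ind]; split_ifs <;> norm_num

lemma bddMeas_ind {Ω : Type*} [MeasurableSpace Ω] {A : Set Ω} (hA : MeasurableSet A) :
    BddMeas (ind A) :=
  ⟨ind_meas hA, 1, ind_abs A⟩

lemma u_comp_ind {Ω : Type*} (A : Set Ω) (u : ℝ → ℝ) :
    (fun ω => u (ind A ω)) = fun ω => if ω ∈ A then u 1 else u 0 := by
  funext ω; rw [ind]; split_ifs <;> rfl
theorem stmt16 {Ω : Type*} [mF : MeasurableSpace Ω] (mG : MeasurableSpace Ω) (hG : mG ≤ mF)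
    (c : Set Ω → ℝ) (hc : IsCapacity c) (hcb : ContFromBelow c) (hrich : Rich c)
    (ρ : (Ω → ℝ) → (Ω → ℝ))
    (hmap : ∀ X, BddMeas X → Measurable[mG] (ρ X) ∧ ∃ M : ℝ, ∀ ω, |ρ X ω| ≤ M)
    (hmono : ∀ X Y, BddMeas X → BddMeas Y →
      (∀ u : ℝ → ℝ, Monotone u →
        choquet c (fun ω => u (X ω)) ≤ choquet c (fun ω => u (Y ω))) →
      ∀ ω, ρ X ω ≤ ρ Y ω)
    (hcomon : ∀ X Y, BddMeas X → BddMeas Y → Comonotone X Y →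
      ∀ ω, ρ (fun ω' => X ω' + Y ω') ω = ρ X ω + ρ Y ω)
    (htrans : ∀ X, BddMeas X → ∀ a : ℝ, ∀ ω, ρ (fun ω' => X ω' + a) ω = ρ X ω + a)
    (hpos : ∀ X, BddMeas X → ∀ a : ℝ, 0 ≤ a → ∀ ω, ρ (fun ω' => a * X ω') ω = a * ρ X ω) :
    ∃ φ : Ω → ℝ → ℝ, IsRandDistortion mG φ ∧
      ∀ X, BddMeas X → ∀ ω, ρ X ω = rdChoquet φ c X ω := by
  classical
  -- Ω is nonempty, otherwise c ∅ = 0 = c univ = 1 is contradictory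
  rcases isEmpty_or_nonempty Ω with hE | hNE
  · exfalso
    have h1 : (Set.univ : Set Ω) = ∅ := Set.univ_eq_empty_iff.2 hE
    have h2 := hc.2.1
    rw [h1, hc.1] at h2
    norm_num at h2
  -- basic ρ facts
  have hBddConst : ∀ a : ℝ, BddMeas (fun _ : Ω => a) := fun a => ⟨measurable_const, |a|, fun ω => le_rfl⟩
  have hρ0 : ∀ ω, ρ (fun _ => (0:ℝ)) ω = 0 := by
    intro ω
    have h := hpos (fun _ => (0:ℝ)) (hBddConst 0) 0 le_rfl ω
    simpa using h
  have hρconst : ∀ (a : ℝ) ω, ρ (fun _ => a) ω = a := by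
    intro a ω
    have h := htrans (fun _ => (0:ℝ)) (hBddConst 0) a ω
    simpa [hρ0 ω] using h
  -- monotonicity of ρ w.r.t. pointwise order
  have hρmono : ∀ X Y : Ω → ℝ, BddMeas X → BddMeas Y → (∀ ω', X ω' ≤ Y ω') →
      ∀ ω, ρ X ω ≤ ρ Y ω := by
    intro X Y hX hY hXY ω
    obtain ⟨hXm, MX, hMX⟩ := hX
    obtain ⟨hYm, MY, hMY⟩ := hY
    refine hmono X Y ⟨hXm, MX, hMX⟩ ⟨hYm, MY, hMY⟩ (fun u hu => ?_) ω
    set B := max MX MY with hB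
    have hXlb : ∀ ω', -B ≤ X ω' := fun ω' => by
      have h := abs_le.1 (hMX ω'); have : MX ≤ B := le_max_left _ _; linarith [h.1]
    have hXub : ∀ ω', X ω' ≤ B := fun ω' => by
      have h := abs_le.1 (hMX ω'); have : MX ≤ B := le_max_left _ _; linarith [h.2]
    have hYlb : ∀ ω', -B ≤ Y ω' := fun ω' => by
      have h := abs_le.1 (hMY ω'); have : MY ≤ B := le_max_right _ _; linarith [h.1]
    have hYub : ∀ ω', Y ω' ≤ B := fun ω' => by
      have h := abs_le.1 (hMY ω'); have : MY ≤ B := le_max_right _ _; linarith [h.2]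
    have hBB : -B ≤ B := le_trans (hXlb hNE.some) (hXub hNE.some)
    show Ifun (fun x => c {ω' | u (X ω') > x}) ≤ Ifun (fun x => c {ω' | u (Y ω') > x})
    refine Ifun_mono _ _ (u (-B)) (u B) (hu hBB)
      ((cap_anti hc (fun ω' => u (X ω'))).measurable)
      ((cap_anti hc (fun ω' => u (Y ω'))).measurable)
      (fun x => cap_abs hc _) (fun x => cap_abs hc _)
      ?_ ?_ ?_ ?_ ?_
    · intro x hx
      have : {ω' | u (X ω') > x} = Set.univ :=
        Set.eq_univ_of_forall (fun ω' => lt_of_lt_of_le hx (hu (hXlb ω')))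
      rw [this]; exact hc.2.1
    · intro x hx
      have : {ω' | u (X ω') > x} = ∅ := by
        ext ω'; simp only [Set.mem_setOf_eq, Set.mem_empty_iff_false, iff_false, not_lt]
        exact le_trans (hu (hXub ω')) hx
      rw [this]; exact hc.1
    · intro x hx
      have : {ω' | u (Y ω') > x} = Set.univ :=
        Set.eq_univ_of_forall (fun ω' => lt_of_lt_of_le hx (hu (hYlb ω')))
      rw [this]; exact hc.2.1
    · intro x hx
      have : {ω' | u (Y ω') > x} = ∅ := by
        ext ω'; simp only [Set.mem_setOf_eq, Set.mem_empty_iff_false, iff_false, not_lt]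
        exact le_trans (hu (hYub ω')) hx
      rw [this]; exact hc.1
    · intro x
      exact hc.2.2 _ _ (fun ω' h => lt_of_lt_of_le h (hu (hXY ω')))
  -- monotonicity of ρ on indicators
  have hρind_mono : ∀ A B : Set Ω, MeasurableSet A → MeasurableSet B → c A ≤ c B →
      ∀ ω, ρ (ind A) ω ≤ ρ (ind B) ω := by
    intro A B hA hB hAB ω
    refine hmono _ _ (bddMeas_ind hA) (bddMeas_ind hB) (fun u hu => ?_) ω
    show choquet c (fun ω' => u (ind A ω')) ≤ choquet c (fun ω' => u (ind B ω'))
    rw [u_comp_ind A u, u_comp_ind B u, choquet_ite hc A (u 0) (u 1) (hu zero_le_one),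
      choquet_ite hc B (u 0) (u 1) (hu zero_le_one)]
    have := mul_le_mul_of_nonneg_left hAB (sub_nonneg.2 (hu (zero_le_one)))
    linarith
  have hρind_eq : ∀ A B : Set Ω, MeasurableSet A → MeasurableSet B → c A = c B →
      ∀ ω, ρ (ind A) ω = ρ (ind B) ω := fun A B hA hB h ω =>
    le_antisymm (hρind_mono A B hA hB (le_of_eq h) ω) (hρind_mono B A hB hA (ge_of_eq h) ω)
  -- richness: all capacities in [0,1] are attained
  obtain ⟨Z, hZm, hZc, hZbot, hZtop⟩ := hrich
  have hattain : ∀ s : ℝ, s ∈ Set.Ioo (0:ℝ) 1 → ∃ A : Set Ω, MeasurableSet A ∧ c A = s := by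
    intro s hs
    obtain ⟨x₁, hx₁⟩ := (hZbot.eventually_lt_const (show (0:ℝ) < 1 - s by linarith [hs.2])).exists
    obtain ⟨x₂, hx₂⟩ := (hZtop.eventually_const_lt (show 1 - s < 1 by linarith [hs.1])).exists
    have hmem : (1 - s) ∈ Set.uIcc (distFun c Z x₁) (distFun c Z x₂) := by
      rw [Set.mem_uIcc]; left; exact ⟨le_of_lt hx₁, le_of_lt hx₂⟩
    obtain ⟨x, -, hx⟩ := intermediate_value_uIcc hZc.continuousOn hmem
    refine ⟨{ω | Z ω > x}, measurableSet_lt measurable_const hZm, ?_⟩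
    have h2 : distFun c Z x = 1 - s := hx
    rw [distFun] at h2; linarith
  have hqex : ∃ q : ℝ → Set Ω, ∀ s, s ∈ Set.Icc (0:ℝ) 1 → MeasurableSet (q s) ∧ c (q s) = s := by
    refine ⟨fun s => if h : s ∈ Set.Ioo (0:ℝ) 1 then (hattain s h).choose
      else if s ≤ 0 then ∅ else Set.univ, ?_⟩
    intro s hs
    by_cases h : s ∈ Set.Ioo (0:ℝ) 1
    · simp only [dif_pos h]
      exact ⟨(hattain s h).choose_spec.1, (hattain s h).choose_spec.2⟩
    · have h01 : s = 0 ∨ s = 1 := by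
        rcases hs with ⟨h0, h1⟩
        rw [Set.mem_Ioo] at h
        push_neg at h
        rcases eq_or_lt_of_le h0 with he | hl
        · left; exact he.symm
        · right; linarith [h hl]
      rcases h01 with rfl | rfl
      · simp only [dif_neg h, if_pos le_rfl]
        exact ⟨MeasurableSet.empty, hc.1⟩
      · have hn1 : ¬ ((1:ℝ) ≤ 0) := by norm_num
        simp only [dif_neg h, if_neg hn1]
        exact ⟨MeasurableSet.univ, hc.2.1⟩
  obtain ⟨q, hq⟩ := hqex
  -- the random distortion function
  set φ : Ω → ℝ → ℝ := fun ω t => ρ (ind (q t)) ω with hφdef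
  have hφeq : ∀ A : Set Ω, MeasurableSet A → ∀ ω, φ ω (c A) = ρ (ind A) ω := by
    intro A hA ω
    have hmem := cap_mem hc A
    obtain ⟨hqm, hqc⟩ := hq (c A) hmem
    exact le_antisymm (hρind_mono _ _ hqm hA (le_of_eq hqc) ω)
      (hρind_mono _ _ hA hqm (ge_of_eq hqc) ω)
  have hφ0 : ∀ ω, φ ω 0 = 0 := by
    intro ω
    have h := hφeq ∅ MeasurableSet.empty ω
    rw [hc.1] at h
    rw [h]
    have he : ind (∅ : Set Ω) = fun _ => (0:ℝ) := by funext ω'; rw [ind]; simp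
    rw [he, hρ0]
  have hφ1 : ∀ ω, φ ω 1 = 1 := by
    intro ω
    have h := hφeq Set.univ MeasurableSet.univ ω
    rw [hc.2.1] at h
    rw [h]
    have he : ind (Set.univ : Set Ω) = fun _ => (1:ℝ) := by funext ω'; rw [ind]; simp
    rw [he, hρconst]
  have hφmono : ∀ ω, MonotoneOn (φ ω) (Set.Icc (0:ℝ) 1) := by
    intro ω t ht s hs hts
    exact hρind_mono _ _ (hq t ht).1 (hq s hs).1 (by rw [(hq t ht).2, (hq s hs).2]; exact hts) ω
  have hφrange : ∀ ω, ∀ t ∈ Set.Icc (0:ℝ) 1, φ ω t ∈ Set.Icc (0:ℝ) 1 := by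
    intro ω t ht
    constructor
    · have h := hφmono ω (Set.left_mem_Icc.2 zero_le_one) ht ht.1
      rw [hφ0 ω] at h; exact h
    · have h := hφmono ω ht (Set.right_mem_Icc.2 zero_le_one) ht.2
      rw [hφ1 ω] at h; exact h
  have hφmeas : ∀ t ∈ Set.Icc (0:ℝ) 1, Measurable[mG] fun ω => φ ω t := by
    intro t ht
    exact (hmap _ (bddMeas_ind (hq t ht).1)).1
  -- antitonicity and bounds of the integrands
  have hgφanti : ∀ (W : Ω → ℝ) ω, Antitone (fun x => φ ω (c {ω' | W ω' > x})) := by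
    intro W ω x y hxy
    exact hφmono ω (cap_mem hc _) (cap_mem hc _) (cap_anti hc W hxy)
  have hgφbd : ∀ (W : Ω → ℝ) ω x, |φ ω (c {ω' | W ω' > x})| ≤ 1 := by
    intro W ω x
    have h := hφrange ω (c {ω' | W ω' > x}) (cap_mem hc _)
    rw [abs_le]; exact ⟨by linarith [h.1], h.2⟩
  refine ⟨φ, ⟨hφ0, hφ1, hφmono, hφrange, hφmeas⟩, ?_⟩
  -- monotonicity of rdChoquet
  have hrdmono : ∀ (U V : Ω → ℝ) (B : ℝ), (∀ ω', |U ω'| ≤ B) → (∀ ω', |V ω'| ≤ B) →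
      (∀ ω', U ω' ≤ V ω') → ∀ ω, rdChoquet φ c U ω ≤ rdChoquet φ c V ω := by
    intro U V B hU hV hUV ω
    have hB0 : 0 ≤ B := le_trans (abs_nonneg _) (hU hNE.some)
    rw [rdChoquet_eq_Ifun, rdChoquet_eq_Ifun]
    refine Ifun_mono _ _ (-B - 1) B (by linarith) ((hgφanti U ω).measurable)
      ((hgφanti V ω).measurable) (hgφbd U ω) (hgφbd V ω) ?_ ?_ ?_ ?_ ?_
    · intro x hx
      show φ ω (c {ω' | U ω' > x}) = 1
      have h2 : {ω' | U ω' > x} = Set.univ := Set.eq_univ_of_forall (fun ω' => by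
        have := abs_le.1 (hU ω'); show x < U ω'; linarith [this.1])
      rw [h2, hc.2.1]; exact hφ1 ω
    · intro x hx
      show φ ω (c {ω' | U ω' > x}) = 0
      have h2 : {ω' | U ω' > x} = ∅ := by
        ext ω'; simp only [Set.mem_setOf_eq, Set.mem_empty_iff_false, iff_false, not_lt]
        have := abs_le.1 (hU ω'); linarith [this.2]
      rw [h2, hc.1]; exact hφ0 ω
    · intro x hx
      show φ ω (c {ω' | V ω' > x}) = 1
      have h2 : {ω' | V ω' > x} = Set.univ := Set.eq_univ_of_forall (fun ω' => by
        have := abs_le.1 (hV ω'); show x < V ω'; linarith [this.1])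
      rw [h2, hc.2.1]; exact hφ1 ω
    · intro x hx
      show φ ω (c {ω' | V ω' > x}) = 0
      have h2 : {ω' | V ω' > x} = ∅ := by
        ext ω'; simp only [Set.mem_setOf_eq, Set.mem_empty_iff_false, iff_false, not_lt]
        have := abs_le.1 (hV ω'); linarith [this.2]
      rw [h2, hc.1]; exact hφ0 ω
    · intro x
      exact hφmono ω (cap_mem hc _) (cap_mem hc _)
        (hc.2.2 _ _ (fun ω' h => lt_of_lt_of_le h (hUV ω')))
  -- main argument
  intro X hX ω
  obtain ⟨hXm, MX, hMX⟩ := hX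
  have hMX0 : 0 ≤ MX := le_trans (abs_nonneg _) (hMX hNE.some)
  set M : ℝ := MX + 1 with hMdef
  have hM : 0 < M := by simp only [hMdef]; linarith
  have hXub : ∀ ω', X ω' ≤ MX := fun ω' => (abs_le.1 (hMX ω')).2
  have hXlb : ∀ ω', -MX ≤ X ω' := fun ω' => (abs_le.1 (hMX ω')).1
  have key : ∀ n : ℕ, 0 < n → |ρ X ω - rdChoquet φ c X ω| ≤ 2 * M / n := by
    intro n hn
    have hn' : (0:ℝ) < n := Nat.cast_pos.2 hn
    set ε : ℝ := 2 * M / n with hεdef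
    have hε : 0 < ε := div_pos (by linarith) hn'
    have hnε : (n:ℝ) * ε = 2 * M := by
      rw [hεdef]; field_simp
    set S : ℕ → Ω → ℝ :=
      fun j ω' => ∑ k ∈ Finset.range j, ε * ind {ω'' | X ω'' > -M + ((k:ℝ)+1) * ε} ω' with hSdef
    set Xn : Ω → ℝ := fun ω' => S n ω' + (-M) with hXndef
    -- structure of S n
    have hform : ∀ ω', ∃ m : ℕ, m < n ∧ S n ω' = m * ε ∧
        (∀ k : ℕ, (X ω' > -M + ((k:ℝ)+1) * ε) ↔ k < m) := by
      intro ω'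
      have hcast : ((n - 1 : ℕ) : ℝ) + 1 = (n : ℝ) := by
        have h2 : n - 1 + 1 = n := Nat.succ_pred_eq_of_pos hn
        exact_mod_cast congrArg (fun k : ℕ => (k:ℝ)) h2
      have hnP : ¬ (X ω' > -M + (((n - 1 : ℕ) : ℝ) + 1) * ε) := by
        rw [hcast]
        intro hgt
        have h3 := hnε
        have h4 := hXub ω'
        simp only [hMdef] at hgt h3
        linarith
      have hex : ∃ k : ℕ, ¬ (X ω' > -M + ((k:ℝ)+1) * ε) := ⟨n - 1, hnP⟩
      set m := Nat.find hex with hmdef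
      have hnotm : ¬ (X ω' > -M + ((m:ℝ)+1) * ε) := Nat.find_spec hex
      have hmle : m ≤ n - 1 := Nat.find_min' hex hnP
      have hmn : m < n := lt_of_le_of_lt hmle (Nat.pred_lt hn.ne')
      have hiff : ∀ k : ℕ, (X ω' > -M + ((k:ℝ)+1) * ε) ↔ k < m := by
        intro k
        constructor
        · intro hk
          by_contra hkm
          push_neg at hkm
          apply hnotm
          have hc2 : (m:ℝ) ≤ k := Nat.cast_le.2 hkm
          nlinarith [hε.le]
        · intro hk
          exact not_not.1 (Nat.find_min hex hk)
      refine ⟨m, hmn, ?_, hiff⟩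
      have hterm : ∀ k ∈ Finset.range n,
          ε * ind {ω'' | X ω'' > -M + ((k:ℝ)+1) * ε} ω' = if k < m then ε else 0 := by
        intro k _
        simp only [ind, Set.mem_setOf_eq]
        by_cases h : k < m
        · rw [if_pos ((hiff k).2 h), if_pos h, mul_one]
        · rw [if_neg (fun hh => h ((hiff k).1 hh)), if_neg h, mul_zero]
      calc S n ω' = ∑ k ∈ Finset.range n, (if k < m then ε else 0) := by
            simp only [hSdef]; exact Finset.sum_congr rfl hterm
        _ = ∑ k ∈ Finset.range m, (if k < m then ε else 0) :=
            (Finset.sum_subset (Finset.range_subset_range.2 hmn.le)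
              (fun k _ hk2 => if_neg (by simpa [Finset.mem_range] using hk2))).symm
        _ = ∑ k ∈ Finset.range m, ε :=
            Finset.sum_congr rfl (fun k hk => if_pos (Finset.mem_range.1 hk))
        _ = m * ε := by rw [Finset.sum_const, Finset.card_range, nsmul_eq_mul]
    have hSnonneg : ∀ j ω', 0 ≤ S j ω' := fun j ω' => by
      simp only [hSdef]
      exact Finset.sum_nonneg (fun k _ => mul_nonneg hε.le (ind_nonneg _ _))
    have hSbd : ∀ j ω', |S j ω'| ≤ j * ε := by
      intro j ω'
      simp only [hSdef]
      calc |∑ k ∈ Finset.range j, ε * ind {ω'' | X ω'' > -M + ((k:ℝ)+1) * ε} ω'|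
          ≤ ∑ k ∈ Finset.range j, |ε * ind {ω'' | X ω'' > -M + ((k:ℝ)+1) * ε} ω'| :=
            Finset.abs_sum_le_sum_abs _ _
        _ ≤ ∑ k ∈ Finset.range j, ε := Finset.sum_le_sum (fun k _ => by
            rw [abs_mul, abs_of_pos hε]
            calc ε * |ind _ ω'| ≤ ε * 1 := mul_le_mul_of_nonneg_left (ind_abs _ _) hε.le
              _ = ε := mul_one ε)
        _ = j * ε := by rw [Finset.sum_const, Finset.card_range, nsmul_eq_mul]
    have hSmeas : ∀ j, Measurable (S j) := by
      intro j
      simp only [hSdef]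
      exact Finset.measurable_sum _ (fun k _ =>
        (ind_meas (measurableSet_lt measurable_const hXm)).const_mul ε)
    have hBddS : ∀ j, BddMeas (S j) := fun j => ⟨hSmeas j, j * ε, hSbd j⟩
    have hXnle : ∀ ω', Xn ω' ≤ X ω' := by
      intro ω'
      obtain ⟨m, hmn, hSe, hiff⟩ := hform ω'
      simp only [hXndef]
      rw [hSe]
      rcases Nat.eq_zero_or_pos m with rfl | hm
      · simp only [Nat.cast_zero, zero_mul, zero_add]
        have := hXlb ω'
        simp only [hMdef]
        linarith
      · have h1 := (hiff (m-1)).2 (Nat.pred_lt hm.ne')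
        have hcast : ((m - 1 : ℕ) : ℝ) + 1 = (m:ℝ) := by
          have h2 : m - 1 + 1 = m := Nat.succ_pred_eq_of_pos hm
          exact_mod_cast congrArg (fun k : ℕ => (k:ℝ)) h2
        rw [hcast] at h1
        linarith
    have hXnge : ∀ ω', X ω' ≤ Xn ω' + ε := by
      intro ω'
      obtain ⟨m, hmn, hSe, hiff⟩ := hform ω'
      simp only [hXndef]
      rw [hSe]
      have h1 : ¬ (X ω' > -M + ((m:ℝ)+1) * ε) := fun h => lt_irrefl m ((hiff m).1 h)
      push_neg at h1
      nlinarith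
    have hXnlb : ∀ ω', -M ≤ Xn ω' := fun ω' => by
      simp only [hXndef]; linarith [hSnonneg n ω']
    have hXnub : ∀ ω', Xn ω' ≤ M - ε := by
      intro ω'
      obtain ⟨m, hmn, hSe, hiff⟩ := hform ω'
      simp only [hXndef]
      rw [hSe]
      have h1 : (m:ℝ) + 1 ≤ n := by exact_mod_cast Nat.succ_le_of_lt hmn
      have h2 : ((m:ℝ) + 1) * ε ≤ (n:ℝ) * ε := mul_le_mul_of_nonneg_right h1 hε.le
      have h3 := hnε
      nlinarith
    have hXnbd : ∀ ω', |Xn ω'| ≤ M := by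
      intro ω'
      rw [abs_le]
      refine ⟨hXnlb ω', ?_⟩
      linarith [hXnub ω', hε.le]
    have hBddXn : BddMeas Xn := ⟨by rw [hXndef]; exact (hSmeas n).add_const _, M, hXnbd⟩
    -- comonotonicity
    have hindmono : ∀ (t : ℝ) ω₁ ω₂, X ω₁ ≤ X ω₂ →
        ind {ω'' | X ω'' > t} ω₁ ≤ ind {ω'' | X ω'' > t} ω₂ := by
      intro t ω₁ ω₂ h
      simp only [ind, Set.mem_setOf_eq]
      by_cases h1 : X ω₁ > t
      · rw [if_pos h1, if_pos (lt_of_lt_of_le h1 h)]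
      · rw [if_neg h1]; split_ifs <;> norm_num
    have hSmonoX : ∀ j ω₁ ω₂, X ω₁ ≤ X ω₂ → S j ω₁ ≤ S j ω₂ := by
      intro j ω₁ ω₂ h
      simp only [hSdef]
      exact Finset.sum_le_sum (fun k _ =>
        mul_le_mul_of_nonneg_left (hindmono _ ω₁ ω₂ h) hε.le)
    have hcomS : ∀ j : ℕ, Comonotone (S j)
        (fun ω' => ε * ind {ω'' | X ω'' > -M + ((j:ℝ)+1) * ε} ω') := by
      intro j ω₁ ω₂
      show 0 ≤ (S j ω₁ - S j ω₂) * (ε * ind {ω'' | X ω'' > -M + ((j:ℝ)+1) * ε} ω₁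
        - ε * ind {ω'' | X ω'' > -M + ((j:ℝ)+1) * ε} ω₂)
      rcases le_total (X ω₁) (X ω₂) with h | h
      · have h1 := hSmonoX j ω₁ ω₂ h
        have h2 := mul_le_mul_of_nonneg_left (hindmono (-M + ((j:ℝ)+1) * ε) ω₁ ω₂ h) hε.le
        nlinarith [mul_nonneg (sub_nonneg.2 h1) (sub_nonneg.2 h2)]
      · have h1 := hSmonoX j ω₂ ω₁ h
        have h2 := mul_le_mul_of_nonneg_left (hindmono (-M + ((j:ℝ)+1) * ε) ω₂ ω₁ h) hε.le
        nlinarith [mul_nonneg (sub_nonneg.2 h1) (sub_nonneg.2 h2)]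
    -- value of ρ on the staircase
    have hρS : ∀ j : ℕ, ρ (S j) ω
        = ∑ k ∈ Finset.range j, ε * φ ω (c {ω'' | X ω'' > -M + ((k:ℝ)+1) * ε}) := by
      intro j
      induction j with
      | zero =>
        have h0 : S 0 = fun _ : Ω => (0:ℝ) := by funext ω'; simp [hSdef]
        rw [h0, hρ0 ω]
        simp
      | succ j ih =>
        have hmeasA : MeasurableSet {ω'' | X ω'' > -M + ((j:ℝ)+1) * ε} :=
          measurableSet_lt measurable_const hXm
        have hBddI : BddMeas (fun ω' => ε * ind {ω'' | X ω'' > -M + ((j:ℝ)+1) * ε} ω') :=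
          ⟨(ind_meas hmeasA).const_mul ε, ε, fun ω' => by
            rw [abs_mul, abs_of_pos hε]
            calc ε * |ind _ ω'| ≤ ε * 1 := mul_le_mul_of_nonneg_left (ind_abs _ _) hε.le
              _ = ε := mul_one ε⟩
        have hfe : S (j+1) = fun ω' => S j ω' + ε * ind {ω'' | X ω'' > -M + ((j:ℝ)+1) * ε} ω' := by
          funext ω'
          simp only [hSdef]
          rw [Finset.sum_range_succ]
        rw [hfe, hcomon (S j) _ (hBddS j) hBddI (hcomS j) ω, ih, Finset.sum_range_succ]
        congr 1
        rw [hpos (ind {ω'' | X ω'' > -M + ((j:ℝ)+1) * ε}) (bddMeas_ind hmeasA) ε hε.le ω]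
        congr 1
        exact (hφeq _ hmeasA ω).symm
    -- level sets of the staircase
    have hsetXn : ∀ k : ℕ, k < n → ∀ x, -M + (k:ℝ) * ε ≤ x → x < -M + ((k:ℝ)+1) * ε →
        {ω' | Xn ω' > x} = {ω'' | X ω'' > -M + ((k:ℝ)+1) * ε} := by
      intro k hk x hx1 hx2
      ext ω'
      obtain ⟨m, hmn, hSe, hiff⟩ := hform ω'
      simp only [Set.mem_setOf_eq, hXndef]
      rw [hSe, hiff k]
      constructor
      · intro h
        have hkm : (k:ℝ) * ε < (m:ℝ) * ε := by linarith
        have h2 : (k:ℝ) < m := lt_of_mul_lt_mul_right hkm hε.le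
        exact_mod_cast h2
      · intro h
        have h2 : (k:ℝ) + 1 ≤ m := by exact_mod_cast Nat.succ_le_of_lt h
        have h3 : ((k:ℝ) + 1) * ε ≤ (m:ℝ) * ε := mul_le_mul_of_nonneg_right h2 hε.le
        linarith
    -- rdChoquet of the staircase
    have hrdXn : rdChoquet φ c Xn ω
        = -M + ∑ k ∈ Finset.range n, ε * φ ω (c {ω'' | X ω'' > -M + ((k:ℝ)+1) * ε}) := by
      rw [rdChoquet_eq_Ifun]
      refine Ifun_step _ ((hgφanti Xn ω).measurable) (hgφbd Xn ω) (-M) ε hε.le n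
        (fun k => φ ω (c {ω'' | X ω'' > -M + ((k:ℝ)+1) * ε})) ?_ ?_ ?_
      · intro k hk x hx1 hx2
        show φ ω (c {ω' | Xn ω' > x}) = _
        rw [hsetXn k hk x hx1 hx2]
      · intro x hx
        show φ ω (c {ω' | Xn ω' > x}) = 1
        have h2 : {ω' | Xn ω' > x} = Set.univ :=
          Set.eq_univ_of_forall (fun ω' => lt_of_lt_of_le hx (hXnlb ω'))
        rw [h2, hc.2.1]; exact hφ1 ω
      · intro x hx
        show φ ω (c {ω' | Xn ω' > x}) = 0
        have h2 : {ω' | Xn ω' > x} = ∅ := by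
          ext ω'
          simp only [Set.mem_setOf_eq, Set.mem_empty_iff_false, iff_false, not_lt]
          have h3 := hXnub ω'
          have h4 := hnε
          linarith
        rw [h2, hc.1]; exact hφ0 ω
    have hrdXnε : rdChoquet φ c (fun ω' => Xn ω' + ε) ω
        = (-M + ε) + ∑ k ∈ Finset.range n, ε * φ ω (c {ω'' | X ω'' > -M + ((k:ℝ)+1) * ε}) := by
      rw [rdChoquet_eq_Ifun]
      refine Ifun_step _ ((hgφanti _ ω).measurable) (hgφbd _ ω) (-M + ε) ε hε.le n
        (fun k => φ ω (c {ω'' | X ω'' > -M + ((k:ℝ)+1) * ε})) ?_ ?_ ?_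
      · intro k hk x hx1 hx2
        show φ ω (c {ω' | Xn ω' + ε > x}) = _
        have hset : {ω' | Xn ω' + ε > x} = {ω' | Xn ω' > x - ε} := by
          ext ω'; simp only [Set.mem_setOf_eq]; constructor <;> intro h <;> linarith
        rw [hset, hsetXn k hk (x - ε) (by linarith) (by linarith)]
      · intro x hx
        show φ ω (c {ω' | Xn ω' + ε > x}) = 1
        have h2 : {ω' | Xn ω' + ε > x} = Set.univ :=
          Set.eq_univ_of_forall (fun ω' => by
            show x < Xn ω' + ε
            linarith [hXnlb ω'])
        rw [h2, hc.2.1]; exact hφ1 ω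
      · intro x hx
        show φ ω (c {ω' | Xn ω' + ε > x}) = 0
        have h2 : {ω' | Xn ω' + ε > x} = ∅ := by
          ext ω'
          simp only [Set.mem_setOf_eq, Set.mem_empty_iff_false, iff_false, not_lt]
          have h3 := hXnub ω'
          have h4 := hnε
          linarith
        rw [h2, hc.1]; exact hφ0 ω
    -- ρ of the staircase
    have hρXn : ρ Xn ω
        = -M + ∑ k ∈ Finset.range n, ε * φ ω (c {ω'' | X ω'' > -M + ((k:ℝ)+1) * ε}) := by
      have h := htrans (S n) (hBddS n) (-M) ω
      rw [hXndef, h, hρS n]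
      ring
    have hBddXnε : BddMeas (fun ω' => Xn ω' + ε) :=
      ⟨hBddXn.1.add_const _, M + ε, fun ω' => by
        have h := abs_le.1 (hXnbd ω')
        show |Xn ω' + ε| ≤ M + ε
        rw [abs_le]
        exact ⟨by linarith [h.1], by linarith [h.2]⟩⟩
    have hρXnε : ρ (fun ω' => Xn ω' + ε) ω = ρ Xn ω + ε := htrans Xn hBddXn ε ω
    -- squeeze
    have hXbd'' : ∀ ω', |X ω'| ≤ M + ε := fun ω' => le_trans (hMX ω') (by simp only [hMdef]; linarith)
    have hXnbd' : ∀ ω', |Xn ω'| ≤ M + ε := fun ω' => le_trans (hXnbd ω') (by linarith)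
    have hXnεbd : ∀ ω', |Xn ω' + ε| ≤ M + ε := fun ω' => by
      have h := abs_le.1 (hXnbd ω')
      rw [abs_le]
      exact ⟨by linarith [h.1], by linarith [h.2]⟩
    have h1 : ρ Xn ω ≤ ρ X ω := hρmono Xn X hBddXn ⟨hXm, MX, hMX⟩ hXnle ω
    have h2 : ρ X ω ≤ ρ Xn ω + ε := by
      have h := hρmono X _ ⟨hXm, MX, hMX⟩ hBddXnε hXnge ω
      rwa [hρXnε] at h
    have h3 : rdChoquet φ c Xn ω ≤ rdChoquet φ c X ω :=
      hrdmono Xn X (M + ε) hXnbd' hXbd'' hXnle ω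
    have h4 : rdChoquet φ c X ω ≤ rdChoquet φ c Xn ω + ε := by
      have h := hrdmono X _ (M + ε) hXbd'' hXnεbd hXnge ω
      rw [hrdXnε] at h
      rw [hrdXn]
      linarith
    have h5 : ρ Xn ω = rdChoquet φ c Xn ω := by rw [hρXn, hrdXn]
    rw [abs_le]
    constructor <;> [skip; skip] <;> linarith [h1, h2, h3, h4, h5]
  -- pass to the limit
  have h0 : Filter.Tendsto (fun n : ℕ => 2 * M / n) Filter.atTop (nhds 0) :=
    tendsto_const_div_atTop_nhds_zero_nat (2 * M)
  have habs : |ρ X ω - rdChoquet φ c X ω| ≤ 0 := by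
    refine ge_of_tendsto h0 ?_
    filter_upwards [Filter.eventually_ge_atTop 1] with n hn
    exact key n hn
  have hfin : ρ X ω - rdChoquet φ c X ω = 0 := abs_eq_zero.1 (le_antisymm habs (abs_nonneg _))
  linarith
end
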